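/- arXiv:2204.08228 — 12 statements merged into one kernel-verified Lean document; each statement's English description precedes it below -/
import Mathlib

section
/- For every odd natural number k ≥ 3, the alternating sum ∑_{j=1}^{(k-1)/2} (-1)^{j-1} sin((2j-1)π/(2k)) equals (-1)^{(k-3)/2}/2. -/
open Real Finset

/-- Multiplying by `2 cos θ` turns each term into `sin (2jθ) + sin ((2j-2)θ)`, so the alternating
sum telescopes. -/
theorem two_mul_cos_mul_sum_Icc_neg_one_pow_mul_sin (θ : ℝ) (n : ℕ) :
    2 * cos θ * ∑ j ∈ Icc 1 n, (-1 : ℝ) ^ (j - 1) * sin ((2 * (j : ℝ) - 1) * θ) =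
      (-1 : ℝ) ^ (n - 1) * sin (2 * (n : ℝ) * θ) := by
  induction n with
  | zero => simp
  | succ n ih =>
    have hterm : 2 * cos θ * sin ((2 * ((n + 1 : ℕ) : ℝ) - 1) * θ) =
        sin (2 * (n : ℝ) * θ) + sin (2 * ((n + 1 : ℕ) : ℝ) * θ) := by
      rw [mul_right_comm, two_mul_sin_mul_cos]
      push_cast
      ring_nf
    rw [sum_Icc_succ_top (by omega), mul_add, ih, Nat.add_sub_cancel,
      mul_left_comm, hterm]
    rcases n with _ | n
    · simp
    · rw [Nat.add_sub_cancel, pow_succ]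
      ring

theorem stmt0 (k : ℕ) (hk : Odd k) (hk3 : 3 ≤ k) :
    ∑ j ∈ Finset.Icc 1 ((k - 1) / 2),
      (-1 : ℝ) ^ (j - 1) * Real.sin ((2 * (j : ℝ) - 1) * π / (2 * k)) =
    (-1 : ℝ) ^ ((k - 3) / 2) / 2 := by
  obtain ⟨m, rfl⟩ := hk
  have hm : 1 ≤ (m : ℝ) := by exact_mod_cast (by omega : 1 ≤ m)
  rw [show (2 * m + 1 - 1) / 2 = m by omega, show (2 * m + 1 - 3) / 2 = m - 1 by omega]
  simp_rw [mul_div_assoc]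
  set θ : ℝ := π / (2 * (2 * m + 1 : ℕ))
  have hθ : 0 < θ := by positivity
  have hcos : 0 < cos θ := cos_pos_of_mem_Ioo ⟨by linarith [pi_pos], by
    rw [div_lt_div_iff_of_pos_left pi_pos (by positivity) two_pos]; push_cast; linarith⟩
  -- `2mθ = π/2 - θ`, so the telescoped sum ends in `± cos θ`
  have hsin : sin (2 * (m : ℝ) * θ) = cos θ := by
    rw [← sin_pi_div_two_sub]
    congr 1
    simp only [θ]
    push_cast
    field_simp
    ring
  have htelescope := two_mul_cos_mul_sum_Icc_neg_one_pow_mul_sin θ m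
  rw [hsin] at htelescope
  rw [eq_div_iff two_ne_zero]
  exact mul_left_cancel₀ hcos.ne' (by linear_combination htelescope)
end

section
/- For every odd natural number k ≥ 3, ∑_{j=1}^{(k-1)/2} (-1)^{j-1} csc((2j-1)π/(2k)) = (k + (-1)^{(k+1)/2})/2. -/
/-!
Write `k = 2N + 1` and `x_j = (2j - 1)π / (2k)`. The Dirichlet kernel identity
`sin (k x) = sin x * (1 + 2 ∑_{m=1}^{N} cos (2 m x))`, together with `sin (k x_j) = (-1)^(j-1)`,
expands each signed cosecant as `1 + 2 ∑_{m=1}^{N} cos ((2j - 1) m π / k)`. Exchanging the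
sums, the telescoping identity `2 sin θ ∑_{j=1}^{N} cos ((2j - 1) θ) = sin (2 N θ)` at
`θ = m π / k`, where `2 N θ = m π - θ`, evaluates the inner sum to `(-1)^(m+1)`, so the total is
`N + ∑_{m=1}^{N} (-1)^(m+1) = N + (1 + (-1)^(N+1)) / 2 = (k + (-1)^(N+1)) / 2`.
-/

open Real Finset

theorem sin_two_mul_add_one_mul_eq (x : ℝ) (N : ℕ) :
    sin ((2 * N + 1) * x) = sin x * (1 + ∑ m ∈ Icc 1 N, 2 * cos (2 * m * x)) := by
  induction N with
  | zero => simp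
  | succ n ih =>
    rw [sum_Icc_succ_top (by omega), ← add_assoc, mul_add, ← ih]
    have h₁ : (2 * ((n + 1 : ℕ) : ℝ) + 1) * x = 2 * (n + 1) * x + x := by push_cast; ring
    have h₂ : (2 * (n : ℝ) + 1) * x = 2 * (n + 1) * x - x := by ring
    rw [h₁, h₂, sin_add, sin_sub]
    push_cast
    ring

theorem two_mul_sin_mul_sum_cos_odd_mul (θ : ℝ) (N : ℕ) :
    2 * sin θ * ∑ j ∈ Icc 1 N, cos ((2 * j - 1) * θ) = sin (2 * N * θ) := by
  induction N with
  | zero => simp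
  | succ n ih =>
    rw [sum_Icc_succ_top (by omega), mul_add, ih]
    have h₁ : 2 * ((n + 1 : ℕ) : ℝ) * θ = (2 * n + 1) * θ + θ := by push_cast; ring
    have h₂ : 2 * (n : ℝ) * θ = (2 * n + 1) * θ - θ := by ring
    have h₃ : (2 * ((n + 1 : ℕ) : ℝ) - 1) * θ = (2 * n + 1) * θ := by push_cast; ring
    rw [h₁, h₂, h₃, sin_add, sin_sub]
    ring

theorem sum_Icc_neg_one_pow_succ (N : ℕ) :
    ∑ m ∈ Icc 1 N, (-1 : ℝ) ^ (m + 1) = (1 + (-1 : ℝ) ^ (N + 1)) / 2 := by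
  induction N with
  | zero => simp
  | succ n ih =>
    rw [sum_Icc_succ_top (by omega), ih, pow_succ (-1 : ℝ) (n + 1)]
    ring

theorem sin_odd_mul_pi_div_two {j : ℕ} (hj : 1 ≤ j) :
    sin ((2 * j - 1) * π / 2) = (-1 : ℝ) ^ (j - 1) := by
  obtain ⟨i, rfl⟩ : ∃ i, j = i + 1 := ⟨j - 1, by omega⟩
  have h : (2 * ((i + 1 : ℕ) : ℝ) - 1) * π / 2 = i * π + π / 2 := by push_cast; ring
  rw [h, sin_add_pi_div_two, cos_nat_mul_pi, Nat.add_sub_cancel]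

theorem neg_one_pow_mul_inv_sin_odd_mul_pi_div {N j : ℕ} (hj : 1 ≤ j) (hjN : j ≤ 2 * N + 1) :
    (-1 : ℝ) ^ (j - 1) * (sin ((2 * j - 1) * π / (2 * (2 * N + 1))))⁻¹ =
      1 + ∑ m ∈ Icc 1 N, 2 * cos ((2 * j - 1) * (m * π / (2 * N + 1))) := by
  set x := (2 * (j : ℝ) - 1) * π / (2 * (2 * N + 1))
  have hj' : (1 : ℝ) ≤ j := by exact_mod_cast hj
  have hjN' : (j : ℝ) ≤ 2 * N + 1 := by exact_mod_cast hjN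
  have hx_pos : 0 < x := by apply div_pos <;> nlinarith [pi_pos]
  have hx_lt : x < π := by
    rw [div_lt_iff₀ (by positivity)]
    nlinarith [pi_pos]
  have hsin : sin x ≠ 0 := (sin_pos_of_pos_of_lt_pi hx_pos hx_lt).ne'
  have hkx : (2 * (N : ℝ) + 1) * x = (2 * j - 1) * π / 2 := by
    simp only [x]
    field_simp
  have hdirichlet := sin_two_mul_add_one_mul_eq x N
  rw [hkx, sin_odd_mul_pi_div_two hj] at hdirichlet
  rw [hdirichlet, mul_comm, ← mul_assoc, inv_mul_cancel₀ hsin, one_mul]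
  congr 1
  refine sum_congr rfl fun m _ => ?_
  congr 2
  simp only [x]
  field_simp

theorem sum_two_mul_cos_odd_mul_pi_div {N m : ℕ} (hm : 1 ≤ m) (hmN : m ≤ 2 * N) :
    ∑ j ∈ Icc 1 N, 2 * cos ((2 * j - 1) * (m * π / (2 * N + 1))) = (-1 : ℝ) ^ (m + 1) := by
  set θ := (m : ℝ) * π / (2 * N + 1)
  have hm' : (1 : ℝ) ≤ m := by exact_mod_cast hm
  have hmN' : (m : ℝ) ≤ 2 * N := by exact_mod_cast hmN
  have hθ_pos : 0 < θ := by apply div_pos <;> nlinarith [pi_pos]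
  have hθ_lt : θ < π := by
    rw [div_lt_iff₀ (by positivity)]
    nlinarith [pi_pos]
  have hsin : sin θ ≠ 0 := (sin_pos_of_pos_of_lt_pi hθ_pos hθ_lt).ne'
  have h2Nθ : 2 * (N : ℝ) * θ = m * π - θ := by
    simp only [θ]
    field_simp
    ring
  have htel := two_mul_sin_mul_sum_cos_odd_mul θ N
  rw [h2Nθ, sin_nat_mul_pi_sub] at htel
  apply mul_left_cancel₀ hsin
  rw [← mul_sum, ← mul_assoc, mul_comm (sin θ), htel]
  ring

theorem stmt1_general (k : ℕ) (hk : Odd k) :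
    ∑ j ∈ Finset.Icc 1 ((k - 1) / 2),
      (-1 : ℝ) ^ (j - 1) * (Real.sin ((2 * (j : ℝ) - 1) * π / (2 * k)))⁻¹ =
    ((k : ℝ) + (-1 : ℝ) ^ ((k + 1) / 2)) / 2 := by
  obtain ⟨N, rfl⟩ := hk
  rw [show (2 * N + 1 - 1) / 2 = N by omega, show (2 * N + 1 + 1) / 2 = N + 1 by omega]
  push_cast
  calc ∑ j ∈ Icc 1 N, (-1 : ℝ) ^ (j - 1) * (sin ((2 * j - 1) * π / (2 * (2 * N + 1))))⁻¹
      = ∑ j ∈ Icc 1 N, (1 + ∑ m ∈ Icc 1 N, 2 * cos ((2 * j - 1) * (m * π / (2 * N + 1)))) :=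
        sum_congr rfl fun j hj =>
          neg_one_pow_mul_inv_sin_odd_mul_pi_div (mem_Icc.1 hj).1 (by grind)
    _ = N + ∑ m ∈ Icc 1 N, (-1 : ℝ) ^ (m + 1) := by
        rw [sum_add_distrib, sum_comm]
        refine congrArg₂ (· + ·) (by simp) (sum_congr rfl fun m hm => ?_)
        exact sum_two_mul_cos_odd_mul_pi_div (mem_Icc.1 hm).1 (by grind)
    _ = (2 * N + 1 + (-1 : ℝ) ^ (N + 1)) / 2 := by
        rw [sum_Icc_neg_one_pow_succ]
        ring

theorem stmt1 (k : ℕ) (hk : Odd k) (hk3 : 3 ≤ k) :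
    ∑ j ∈ Finset.Icc 1 ((k - 1) / 2),
      (-1 : ℝ) ^ (j - 1) * (Real.sin ((2 * (j : ℝ) - 1) * π / (2 * k)))⁻¹ =
    ((k : ℝ) + (-1 : ℝ) ^ ((k + 1) / 2)) / 2 :=
  stmt1_general k hk
end

section
/- For every natural number n ≥ 1, ∑_{j=1}^{n} (-1)^{j+1} sin((2j-1)π/(4n+2)) = (-1)^{n+1}/2. -/
/-!
Multiplying by `2 cos θ` turns each term into a sum of two sines at even multiples of `θ`, and
with the alternating signs the sum telescopes to `(-1)^(n+1) sin (2nθ)`. For `θ = π / (4n + 2)`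
one has `2nθ = π/2 - θ`, so this equals `(-1)^(n+1) cos θ`, and `cos θ ≠ 0` because `n ≥ 1`.
-/

open Real Finset

theorem two_mul_cos_mul_sum_alternating_sin_odd (θ : ℝ) (n : ℕ) :
    2 * cos θ * ∑ j ∈ Icc 1 n, (-1 : ℝ) ^ (j + 1) * sin ((2 * (j : ℝ) - 1) * θ) =
      (-1 : ℝ) ^ (n + 1) * sin (2 * n * θ) := by
  induction n with
  | zero => simp
  | succ n ih =>
    set x := (2 * ((n + 1 : ℕ) : ℝ) - 1) * θ
    have product_to_sum :
        2 * cos θ * sin x = sin (2 * ((n + 1 : ℕ) : ℝ) * θ) + sin (2 * n * θ) := by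
      rw [show 2 * ((n + 1 : ℕ) : ℝ) * θ = x + θ by push_cast [x]; ring,
        show 2 * (n : ℝ) * θ = x - θ by push_cast [x]; ring, sin_add, sin_sub]
      ring
    rw [sum_Icc_succ_top (by omega), mul_add, ih]
    linear_combination (-1 : ℝ) ^ n * product_to_sum

theorem stmt2 (n : ℕ) (hn : 1 ≤ n) :
    ∑ j ∈ Finset.Icc 1 n,
      (-1 : ℝ) ^ (j + 1) * Real.sin ((2 * (j : ℝ) - 1) * π / (4 * n + 2)) =
    (-1 : ℝ) ^ (n + 1) / 2 := by
  set θ := π / (4 * n + 2) with hθ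
  have hθ_pos : 0 < θ := by positivity
  have h2n : 2 * (n : ℝ) * θ = π / 2 - θ := by
    rw [hθ]
    field_simp
    ring
  have hcos : 0 < cos θ := by
    have : (0 : ℝ) < n := by exact_mod_cast hn
    refine cos_pos_of_mem_Ioo ⟨by linarith [pi_pos], ?_⟩
    nlinarith
  have telescoped := two_mul_cos_mul_sum_alternating_sin_odd θ n
  rw [h2n, sin_pi_div_two_sub] at telescoped
  simp_rw [mul_div_assoc]
  apply mul_left_cancel₀ (by positivity : 2 * cos θ ≠ 0)
  rw [telescoped]
  ring
end

section
/- For every natural number n ≥ 1, ∑_{k=1}^{n} (-1)^{k+1} sin²(kπ/(2n+2)) = (-1)^{n+1}/2. -/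
/-!
Put `c k = 1/4 - cos((2k+1)x) / (4 cos x)`. Since `cos((2k+1)x) + cos((2k-1)x) = 2 cos(2kx) cos x`,
we get `c k + c (k-1) = (1 - cos(2kx))/2 = sin²(kx)`, so the alternating sum telescopes to
`c 0 + (-1)^(n+1) c n`. For `x = π/(2n+2)` we have `c 0 = 0` and, as `(2n+1)x = π - x`, `c n = 1/2`.
-/

open Real Finset

theorem sum_Icc_neg_one_pow_mul_add_pred {R : Type*} [CommRing R] (f : ℕ → R) (m : ℕ) :
    ∑ k ∈ Icc 1 m, (-1 : R) ^ (k + 1) * (f k + f (k - 1)) = f 0 + (-1) ^ (m + 1) * f m := by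
  induction m with
  | zero => simp
  | succ m ih =>
    rw [sum_Icc_succ_top (by omega), ih, Nat.add_sub_cancel]
    ring

noncomputable def sinSqTelescopeTerm (x : ℝ) (k : ℕ) : ℝ :=
  1 / 4 - cos ((2 * k + 1) * x) / (4 * cos x)

theorem sinSqTelescopeTerm_add_pred (x : ℝ) (hx : cos x ≠ 0) {k : ℕ} (hk : 1 ≤ k) :
    sinSqTelescopeTerm x k + sinSqTelescopeTerm x (k - 1) = sin (k * x) ^ 2 := by
  have hsum : cos ((2 * k + 1) * x) + cos ((2 * ((k - 1 : ℕ) : ℝ) + 1) * x)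
      = 2 * cos (2 * (k * x)) * cos x := by
    rw [Nat.cast_sub hk, Nat.cast_one, show (2 * (k : ℝ) + 1) * x = 2 * (k * x) + x by ring,
      show (2 * ((k : ℝ) - 1) + 1) * x = 2 * (k * x) - x by ring, cos_add, cos_sub]
    ring
  rw [sinSqTelescopeTerm, sinSqTelescopeTerm, sub_add_sub_comm, ← add_div (cos _), hsum,
    sin_sq_eq_half_sub]
  field_simp
  ring

theorem sinSqTelescopeTerm_zero (x : ℝ) (hx : cos x ≠ 0) : sinSqTelescopeTerm x 0 = 0 := by
  rw [sinSqTelescopeTerm, Nat.cast_zero, mul_zero, zero_add, one_mul, div_mul_cancel_right₀ hx]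
  norm_num

theorem sum_Icc_neg_one_pow_mul_sin_sq (x : ℝ) (hx : cos x ≠ 0) (m : ℕ) :
    ∑ k ∈ Icc 1 m, (-1 : ℝ) ^ (k + 1) * sin (k * x) ^ 2
      = (-1) ^ (m + 1) * sinSqTelescopeTerm x m := by
  rw [← zero_add ((-1 : ℝ) ^ (m + 1) * _), ← sinSqTelescopeTerm_zero x hx,
    ← sum_Icc_neg_one_pow_mul_add_pred]
  refine sum_congr rfl fun k hk => ?_
  rw [sinSqTelescopeTerm_add_pred x hx (mem_Icc.1 hk).1]

theorem stmt5 (n : ℕ) (hn : 1 ≤ n) :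
    ∑ k ∈ Finset.Icc 1 n,
      (-1 : ℝ) ^ (k + 1) * (Real.sin ((k : ℝ) * π / (2 * n + 2))) ^ 2 =
    (-1 : ℝ) ^ (n + 1) / 2 := by
  set x : ℝ := π / (2 * n + 2) with hx_def
  have hden : (0 : ℝ) < 2 * n + 2 := by positivity
  have hx_lt : x < π / 2 := by
    have : (1 : ℝ) ≤ n := by exact_mod_cast hn
    rw [hx_def, div_lt_div_iff₀ hden two_pos]
    nlinarith [pi_pos]
  have hcos : 0 < cos x := cos_pos_of_mem_Ioo ⟨by linarith [div_pos pi_pos hden], hx_lt⟩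
  have hreflect : (2 * (n : ℝ) + 1) * x = π - x := by
    rw [hx_def]; field_simp; ring
  have hlast : sinSqTelescopeTerm x n = 1 / 2 := by
    rw [sinSqTelescopeTerm, hreflect, cos_pi_sub]
    field_simp
    ring
  simp_rw [mul_div_assoc]
  rw [sum_Icc_neg_one_pow_mul_sin_sq x hcos.ne' n, hlast]
  ring
end

section
/- For every odd natural number n ≥ 3, ∑_{k=1}^{(n-1)/2} 1/sin²(kπ/n) = (n² - 1)/6. -/
open Real Finset

/-!
Let `ζ = exp (2πi/n)` and `A_k = ∑_{j<n} j ζ^{jk}`. Summation by parts gives `(ζ^k - 1) A_k = n`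
for `0 < k < n`, and `(ζ^k - 1)(ζ^{-k} - 1) = 4 sin²(kπ/n)`, so `1 / sin²(kπ/n)` is
`4 A_k Ā_k / n²`. By orthogonality of the characters `k ↦ ζ^{jk}` (Parseval),
`∑_{k<n} A_k Ā_k = n ∑_{j<n} j²`; removing the term `A_0 Ā_0 = (∑_{j<n} j)²` leaves
`∑_{k=1}^{n-1} 1 / sin²(kπ/n) = (n² - 1)/3`. For odd `n` the terms `k` and `n - k` are equal, and
the sum halves.
-/

lemma sub_one_mul_sum_range_natCast_mul_pow {R : Type*} [CommRing R] (x : R) (n : ℕ) :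
    (x - 1) * ∑ j ∈ range n, (j : R) * x ^ j = n * x ^ n - x * ∑ j ∈ range n, x ^ j := by
  induction n with
  | zero => simp
  | succ n ih =>
    rw [sum_range_succ, mul_add, ih, sum_range_succ]
    push_cast
    ring

section RootsOfUnity

variable {K : Type*} [Field K]

lemma sub_one_mul_sum_range_natCast_mul_pow_of_pow_eq_one {x : K} {n : ℕ} (hxn : x ^ n = 1)
    (hx : x ≠ 1) : (x - 1) * ∑ j ∈ range n, (j : K) * x ^ j = n := by
  rw [sub_one_mul_sum_range_natCast_mul_pow, geom_sum_eq hx, hxn, sub_self, zero_div, mul_zero,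
    mul_one, sub_zero]

lemma IsPrimitiveRoot.sum_range_pow_mul_inv_pow {ζ : K} {n : ℕ} (hζ : IsPrimitiveRoot ζ n)
    {j l : ℕ} (hj : j < n) (hl : l < n) :
    ∑ k ∈ range n, (ζ ^ j * ζ⁻¹ ^ l) ^ k = if j = l then (n : K) else 0 := by
  have hζ0 : ζ ≠ 0 := hζ.ne_zero (by omega)
  split_ifs with hjl
  · subst hjl
    simp [inv_pow, mul_inv_cancel₀ (pow_ne_zero j hζ0)]
  · have hne : ζ ^ j * ζ⁻¹ ^ l ≠ 1 := by
      rw [inv_pow, ← div_eq_mul_inv, ne_eq, div_eq_one_iff_eq (pow_ne_zero l hζ0)]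
      exact fun h ↦ hjl (hζ.pow_inj hj hl h)
    have hpow : (ζ ^ j * ζ⁻¹ ^ l) ^ n = 1 := by
      rw [mul_pow, ← pow_mul, mul_comm j, pow_mul, hζ.pow_eq_one, ← pow_mul, mul_comm l, pow_mul,
        hζ.inv.pow_eq_one, one_pow, one_pow, one_mul]
    rw [geom_sum_eq hne, hpow, sub_self, zero_div]

lemma IsPrimitiveRoot.pow_sub_one_mul_sum_range_natCast_mul_pow {ζ : K} {n k : ℕ}
    (hζ : IsPrimitiveRoot ζ n) (hk0 : k ≠ 0) (hkn : k < n) :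
    (ζ ^ k - 1) * ∑ j ∈ range n, (j : K) * (ζ ^ k) ^ j = n :=
  sub_one_mul_sum_range_natCast_mul_pow_of_pow_eq_one
    (by rw [← pow_mul, mul_comm, pow_mul, hζ.pow_eq_one, one_pow])
    (hζ.pow_ne_one_of_pos_of_lt hk0 hkn)

lemma IsPrimitiveRoot.sum_range_mul_sum_range_inv {ζ : K} {n : ℕ} (hζ : IsPrimitiveRoot ζ n)
    (f g : ℕ → K) :
    ∑ k ∈ range n, (∑ j ∈ range n, f j * (ζ ^ k) ^ j) * ∑ l ∈ range n, g l * (ζ⁻¹ ^ k) ^ l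
      = n * ∑ j ∈ range n, f j * g j := by
  calc _ = ∑ j ∈ range n, ∑ l ∈ range n, f j * g l * ∑ k ∈ range n, (ζ ^ j * ζ⁻¹ ^ l) ^ k := by
        simp_rw [sum_mul_sum, mul_sum]
        rw [sum_comm]
        refine sum_congr rfl fun j _ ↦ ?_
        rw [sum_comm]
        refine sum_congr rfl fun l _ ↦ sum_congr rfl fun k _ ↦ ?_
        ring
    _ = ∑ j ∈ range n, ∑ l ∈ range n, f j * g l * if j = l then (n : K) else 0 :=
        sum_congr rfl fun j hj ↦ sum_congr rfl fun l hl ↦ by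
          rw [hζ.sum_range_pow_mul_inv_pow (mem_range.1 hj) (mem_range.1 hl)]
    _ = n * ∑ j ∈ range n, f j * g j := by
        rw [mul_sum]
        refine sum_congr rfl fun j hj ↦ ?_
        simp [hj, mul_comm]

end RootsOfUnity

lemma two_mul_sum_range_natCast {R : Type*} [CommRing R] (n : ℕ) :
    2 * ∑ j ∈ range n, (j : R) = n * (n - 1) := by
  induction n with
  | zero => simp
  | succ n ih => rw [sum_range_succ, mul_add, ih]; push_cast; ring

lemma six_mul_sum_range_natCast_sq {R : Type*} [CommRing R] (n : ℕ) :
    6 * ∑ j ∈ range n, (j : R) ^ 2 = n * (n - 1) * (2 * n - 1) := by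
  induction n with
  | zero => simp
  | succ n ih => rw [sum_range_succ, mul_add, ih]; push_cast; ring

lemma Complex.exp_mul_I_sub_one_mul_exp_neg_mul_I_sub_one (θ : ℂ) :
    (Complex.exp (θ * Complex.I) - 1) * (Complex.exp (-θ * Complex.I) - 1)
      = 4 * Complex.sin (θ / 2) ^ 2 := by
  have hprod : Complex.exp (θ * Complex.I) * Complex.exp (-θ * Complex.I) = 1 := by
    rw [← Complex.exp_add, neg_mul, add_neg_cancel, Complex.exp_zero]
  have hcos : Complex.cos θ = 1 - 2 * Complex.sin (θ / 2) ^ 2 := by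
    rw [← Complex.cos_two_mul_eq_one_sub, mul_div_cancel₀ _ two_ne_zero]
  linear_combination hprod + Complex.two_cos (x := θ) - 2 * hcos

lemma Complex.exp_two_pi_I_div_pow_sub_one_mul_inv_pow_sub_one (n k : ℕ) :
    (Complex.exp (2 * π * Complex.I / n) ^ k - 1) *
        ((Complex.exp (2 * π * Complex.I / n))⁻¹ ^ k - 1)
      = 4 * Complex.sin (k * π / n) ^ 2 := by
  have h := Complex.exp_mul_I_sub_one_mul_exp_neg_mul_I_sub_one (2 * k * π / n)
  rw [show (2 * k * π / n : ℂ) / 2 = k * π / n by ring] at h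
  rw [← h, ← Complex.exp_neg, ← Complex.exp_nat_mul, ← Complex.exp_nat_mul]
  ring_nf

theorem sum_Ico_one_div_sin_sq (n : ℕ) (hn : 0 < n) :
    ∑ k ∈ Ico 1 n, 1 / sin (k * π / n) ^ 2 = ((n : ℝ) ^ 2 - 1) / 3 := by
  set ζ := Complex.exp (2 * π * Complex.I / n)
  have hζ : IsPrimitiveRoot ζ n := Complex.isPrimitiveRoot_exp n hn.ne'
  set A : ℕ → ℂ := fun k ↦ ∑ j ∈ range n, (j : ℂ) * (ζ ^ k) ^ j
  set B : ℕ → ℂ := fun k ↦ ∑ j ∈ range n, (j : ℂ) * (ζ⁻¹ ^ k) ^ j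
  have hn0 : (n : ℂ) ≠ 0 := Nat.cast_ne_zero.2 hn.ne'
  have hterm : ∀ k ∈ Ico 1 n, (1 / sin (k * π / n) ^ 2 : ℝ) = 4 * (A k * B k) / n ^ 2 := by
    intro k hk
    obtain ⟨hk1, hkn⟩ := mem_Ico.1 hk
    have hA : (ζ ^ k - 1) * A k = n :=
      hζ.pow_sub_one_mul_sum_range_natCast_mul_pow (by omega) hkn
    have hB : (ζ⁻¹ ^ k - 1) * B k = n :=
      hζ.inv.pow_sub_one_mul_sum_range_natCast_mul_pow (by omega) hkn
    have hden := Complex.exp_two_pi_I_div_pow_sub_one_mul_inv_pow_sub_one n k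
    have hsin : 4 * Complex.sin (k * π / n) ^ 2 * (A k * B k) = n ^ 2 := by
      rw [← hden]
      linear_combination (B k * (ζ⁻¹ ^ k - 1)) * hA + n * hB
    have hsin0 : Complex.sin (k * π / n) ^ 2 ≠ 0 := by
      rintro h
      rw [h, mul_zero, zero_mul, eq_comm] at hsin
      exact pow_ne_zero 2 hn0 hsin
    push_cast
    rw [div_eq_div_iff hsin0 (pow_ne_zero 2 hn0)]
    linear_combination -hsin
  have hsum : ∑ k ∈ Ico 1 n, A k * B k = n ^ 2 * (n ^ 2 - 1) / 12 := by
    have hparseval : ∑ k ∈ range n, A k * B k = n * ∑ j ∈ range n, (j : ℂ) ^ 2 := by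
      simp only [sq]
      exact hζ.sum_range_mul_sum_range_inv _ _
    have hA0 : A 0 = ∑ j ∈ range n, (j : ℂ) := by simp [A]
    have hB0 : B 0 = ∑ j ∈ range n, (j : ℂ) := by simp [B]
    rw [sum_range_eq_add_Ico _ hn, hA0, hB0] at hparseval
    linear_combination hparseval + (n / 6 : ℂ) * six_mul_sum_range_natCast_sq (R := ℂ) n
      - ((∑ j ∈ range n, (j : ℂ)) + n * (n - 1) / 2) / 2 * two_mul_sum_range_natCast (R := ℂ) n
  apply Complex.ofReal_injective
  rw [Complex.ofReal_sum, sum_congr rfl hterm, ← sum_div, ← mul_sum, hsum]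
  push_cast
  field_simp
  ring

lemma sin_natCast_sub_mul_pi_div {n k : ℕ} (hk : k ≤ n) :
    sin ((n - k : ℕ) * π / n) = sin (k * π / n) := by
  obtain rfl | hn := n.eq_zero_or_pos
  · rw [Nat.le_zero.1 hk]
  have hn0 : (n : ℝ) ≠ 0 := Nat.cast_ne_zero.2 hn.ne'
  rw [Nat.cast_sub hk, ← sin_pi_sub]
  congr 1
  field_simp
  ring

lemma sum_Ico_one_two_mul_add_one_of_reflect {M : Type*} [AddCommMonoid M] (f : ℕ → M) (m : ℕ)
    (hf : ∀ k ≤ 2 * m + 1, f (2 * m + 1 - k) = f k) :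
    ∑ k ∈ Ico 1 (2 * m + 1), f k = 2 • ∑ k ∈ Ico 1 (m + 1), f k := by
  have hreflect := sum_Ico_reflect f 1 (show m + 1 ≤ 2 * m + 1 + 1 by omega)
  rw [show 2 * m + 1 + 1 - (m + 1) = m + 1 by omega, Nat.add_sub_cancel,
    sum_congr rfl fun k hk ↦ hf k (by grind)] at hreflect
  rw [← sum_Ico_consecutive f (by omega : 1 ≤ m + 1) (by omega : m + 1 ≤ 2 * m + 1), ← hreflect,
    two_nsmul]

theorem stmt6_general (n : ℕ) (hn : Odd n) :
    ∑ k ∈ Finset.Icc 1 ((n - 1) / 2),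
      1 / (Real.sin ((k : ℝ) * π / n)) ^ 2 = ((n : ℝ) ^ 2 - 1) / 6 := by
  obtain ⟨m, rfl⟩ := hn
  have hfull := sum_Ico_one_div_sin_sq (2 * m + 1) (by omega)
  rw [sum_Ico_one_two_mul_add_one_of_reflect _ m fun k hk ↦ by
    rw [sin_natCast_sub_mul_pi_div hk]] at hfull
  rw [two_nsmul] at hfull
  rw [show (2 * m + 1 - 1) / 2 = m by omega, ← Finset.Ico_add_one_right_eq_Icc]
  linarith

theorem stmt6 (n : ℕ) (hn : Odd n) (hn3 : 3 ≤ n) :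
    ∑ k ∈ Finset.Icc 1 ((n - 1) / 2),
      1 / (Real.sin ((k : ℝ) * π / n)) ^ 2 = ((n : ℝ) ^ 2 - 1) / 6 :=
  stmt6_general n hn
end

section
/- For every odd natural number n ≥ 3, ∑_{k=0}^{(n-3)/2} 1/sin²((2k+1)π/(2n)) = (n² - 1)/2. -/
open Real Finset

/-!
With `z = exp (2iθ)` one has `1 / sin² θ = -4z / (z - 1)²`, and when `zⁿ = -1` the geometric sum
gives `4 / (z - 1)² = (∑_{j<n} zʲ)²`. The angles `θ_k = (2k+1)π/(2n)`, `k < n`, correspond to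
`z = ζ^(2k+1)` for a primitive `2n`-th root of unity `ζ`, so `∑_k 1 / sin² θ_k` expands into
character sums `∑_k ζ^((2k+1)m)` with `1 ≤ m < 2n`; these vanish unless `m = n`, which leaves `n²`.
For odd `n = 2m + 1` the terms are symmetric under `k ↦ 2m - k` and the middle one is
`1 / sin² (π/2) = 1`, so the first `m` terms add up to `(n² - 1) / 2`.
-/
lemma geom_sum_sq_of_pow_eq_neg_one {K : Type*} [Field K] {z : K} {n : ℕ} (hz : z ≠ 1)
    (h : z ^ n = -1) : (∑ j ∈ range n, z ^ j) ^ 2 = 4 / (z - 1) ^ 2 := by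
  rw [geom_sum_eq hz, h, div_pow]
  norm_num

lemma Finset.sum_range_two_mul_add_one_of_symm {M : Type*} [AddCommMonoid M] (f : ℕ → M)
    (m : ℕ) (h : ∀ k < m, f (2 * m - k) = f k) :
    ∑ k ∈ range (2 * m + 1), f k = 2 • ∑ k ∈ range m, f k + f m := by
  have hupper : ∑ k ∈ range m, f (m + 1 + k) = ∑ k ∈ range m, f k := by
    rw [← sum_range_reflect]
    refine sum_congr rfl fun k hk => ?_
    rw [← h k (mem_range.mp hk)]
    congr 1
    have := mem_range.mp hk
    omega
  rw [show 2 * m + 1 = m + 1 + m by ring, sum_range_add, hupper, sum_range_succ, two_nsmul]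
  abel

namespace IsPrimitiveRoot

variable {K : Type*} [Field K] {ζ : K} {n : ℕ}

lemma pow_eq_neg_one_of_two_mul (hζ : IsPrimitiveRoot ζ (2 * n)) (hn : n ≠ 0) : ζ ^ n = -1 := by
  have h2 := hζ.pow_of_dvd hn (dvd_mul_left n 2)
  rw [Nat.mul_div_cancel _ (Nat.pos_of_ne_zero hn)] at h2
  exact h2.eq_neg_one_of_two_right

lemma sum_pow_odd_mul_eq_zero (hζ : IsPrimitiveRoot ζ (2 * n)) {m : ℕ} (hm : ¬ n ∣ m) :
    ∑ k ∈ range n, ζ ^ ((2 * k + 1) * m) = 0 := by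
  have hw : ζ ^ (2 * m) ≠ 1 := by
    rwa [Ne, hζ.pow_eq_one_iff_dvd, Nat.mul_dvd_mul_iff_left two_pos]
  have hwn : (ζ ^ (2 * m)) ^ n = 1 := by
    rw [← pow_mul, hζ.pow_eq_one_iff_dvd]
    exact ⟨m, by ring⟩
  calc ∑ k ∈ range n, ζ ^ ((2 * k + 1) * m)
      = ζ ^ m * ∑ k ∈ range n, (ζ ^ (2 * m)) ^ k := by
        rw [mul_sum]
        refine sum_congr rfl fun k _ => ?_
        rw [← pow_mul, ← pow_add]
        ring_nf
    _ = 0 := by rw [geom_sum_eq hw, hwn, sub_self, zero_div, mul_zero]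

lemma sum_pow_odd_mul_self (hζ : IsPrimitiveRoot ζ (2 * n)) (hn : n ≠ 0) :
    ∑ k ∈ range n, ζ ^ ((2 * k + 1) * n) = -n := by
  simp [mul_comm _ n, pow_mul, hζ.pow_eq_neg_one_of_two_mul hn, pow_succ]

lemma sum_sum_pow_odd_mul_add_add_one (hζ : IsPrimitiveRoot ζ (2 * n)) {a : ℕ} (ha : a < n) :
    ∑ b ∈ range n, ∑ k ∈ range n, ζ ^ ((2 * k + 1) * (a + b + 1)) = -n := by
  rw [sum_eq_single (n - 1 - a)]
  · rw [show a + (n - 1 - a) + 1 = n by omega, hζ.sum_pow_odd_mul_self (by omega)]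
  · intro b hb hba
    refine hζ.sum_pow_odd_mul_eq_zero fun hdvd => hba ?_
    have := Nat.eq_of_dvd_of_lt_two_mul (by omega) hdvd (by have := mem_range.mp hb; omega)
    omega
  · intro h
    exact absurd (mem_range.mpr (by omega)) h

theorem sum_neg_four_mul_div_sub_one_sq (hζ : IsPrimitiveRoot ζ (2 * n)) (hn : n ≠ 0) :
    ∑ k ∈ range n, -4 * ζ ^ (2 * k + 1) / (ζ ^ (2 * k + 1) - 1) ^ 2 = (n : K) ^ 2 := by
  have hterm : ∀ k ∈ range n, -4 * ζ ^ (2 * k + 1) / (ζ ^ (2 * k + 1) - 1) ^ 2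
      = -∑ a ∈ range n, ∑ b ∈ range n, ζ ^ ((2 * k + 1) * (a + b + 1)) := by
    intro k hk
    set z := ζ ^ (2 * k + 1)
    have hz : z ≠ 1 := hζ.pow_ne_one_of_pos_of_lt (by omega) (by have := mem_range.mp hk; omega)
    have hzn : z ^ n = -1 := by
      rw [← pow_mul, mul_comm, pow_mul, hζ.pow_eq_neg_one_of_two_mul hn, Odd.neg_one_pow ⟨k, rfl⟩]
    calc -4 * z / (z - 1) ^ 2 = -(z * (∑ j ∈ range n, z ^ j) ^ 2) := by
          rw [geom_sum_sq_of_pow_eq_neg_one hz hzn]; ring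
      _ = _ := by
          rw [sq, sum_mul_sum, mul_sum]
          refine congrArg _ (sum_congr rfl fun a _ => ?_)
          rw [mul_sum]
          refine sum_congr rfl fun b _ => ?_
          rw [pow_mul]
          ring
  rw [sum_congr rfl hterm, sum_neg_distrib, sum_comm, sum_congr rfl fun a _ => sum_comm,
    sum_congr rfl fun a ha => hζ.sum_sum_pow_odd_mul_add_add_one (mem_range.mp ha)]
  simp [sq]

end IsPrimitiveRoot

namespace Complex

lemma one_div_sin_sq (θ : ℂ) :
    1 / sin θ ^ 2 = -4 * exp (2 * θ * I) / (exp (2 * θ * I) - 1) ^ 2 := by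
  have hsin : sin θ ^ 2 = -(exp (2 * θ * I) - 1) ^ 2 / (4 * exp (2 * θ * I)) := by
    have hu : exp (θ * I) ≠ 0 := exp_ne_zero _
    have h2 : exp (2 * θ * I) = exp (θ * I) ^ 2 := by
      rw [← exp_nat_mul]; ring_nf
    rw [h2, show sin θ = (exp (-θ * I) - exp (θ * I)) * I / 2 by rw [← two_sin]; ring,
      neg_mul, exp_neg]
    field_simp
    linear_combination 4 * (exp (θ * I) ^ 2 - 1) ^ 2 * I_sq
  rw [hsin, one_div, inv_div, div_neg]
  ring

end Complex

theorem sum_one_div_sin_sq_odd_mul_pi_div (n : ℕ) (hn : n ≠ 0) :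
    ∑ k ∈ range n, 1 / Real.sin ((2 * k + 1) * π / (2 * n)) ^ 2 = (n : ℝ) ^ 2 := by
  have hζ := Complex.isPrimitiveRoot_exp (2 * n) (by omega)
  apply Complex.ofReal_injective
  push_cast
  rw [← hζ.sum_neg_four_mul_div_sub_one_sq hn]
  refine sum_congr rfl fun k _ => ?_
  have hz : Complex.exp (2 * ((2 * k + 1) * π / (2 * n)) * Complex.I)
      = Complex.exp (2 * π * Complex.I / (2 * n : ℕ)) ^ (2 * k + 1) := by
    rw [← Complex.exp_nat_mul]
    congr 1
    push_cast
    field_simp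
  rw [Complex.one_div_sin_sq, hz]

theorem stmt8 (n : ℕ) (hn : Odd n) (hn3 : 3 ≤ n) :
    ∑ k ∈ Finset.range ((n - 3) / 2 + 1),
      1 / (Real.sin ((2 * (k : ℝ) + 1) * π / (2 * n))) ^ 2 = ((n : ℝ) ^ 2 - 1) / 2 := by
  obtain ⟨m, rfl⟩ := hn
  have hfull := sum_one_div_sin_sq_odd_mul_pi_div (2 * m + 1) (by omega)
  rw [sum_range_two_mul_add_one_of_symm _ m ?symm] at hfull
  case symm =>
    intro k hk
    rw [← Real.sin_pi_sub, Nat.cast_sub (by omega)]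
    congr 3
    push_cast
    field_simp
    ring
  have hmid : (2 * (m : ℝ) + 1) * π / (2 * ((2 * m + 1 : ℕ) : ℝ)) = π / 2 := by
    push_cast
    field_simp
  rw [hmid, Real.sin_pi_div_two, nsmul_eq_mul] at hfull
  rw [show (2 * m + 1 - 3) / 2 + 1 = m by omega]
  push_cast at hfull ⊢
  linarith
end

section
/- For every even natural number n ≥ 2, ∑_{k=0}^{n/2 - 1} 1/sin²((2k+1)π/(2n)) = n²/2. -/
/-!
Put `θₖ = (2k+1)π/(2n)` and `zₖ = exp(2iθₖ)`, so that `z₀, …, z_{n-1}` are the roots of `Xⁿ + 1`.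
From `1 - zₖ = -2i sin θₖ exp(iθₖ)` one gets `1 / sin² θₖ = 4uₖ - 4uₖ²` with `uₖ = 1 / (1 - zₖ)`.
The first two derivatives of `P = ∏ (X - zₖ)` at `1` give `∑ uₖ = P'(1)/P(1) = n/2` and
`(∑ uₖ)² - ∑ uₖ² = P''(1)/P(1) = n(n-1)/2`, hence `∑_{k<n} 1 / sin² θₖ = n²`.
Since `θ_{n-1-k} = π - θₖ`, for even `n` the first half of this sum is half of it.
-/

open Real Finset Polynomial

section ReciprocalPowerSums

variable {K ι : Type*} [Field K] [DecidableEq ι] {s : Finset ι} {a : ι → K} {x : K}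

theorem prod_erase_sub_eq_mul_inv (hx : ∀ i ∈ s, x ≠ a i) {i : ι} (hi : i ∈ s) :
    ∏ j ∈ s.erase i, (x - a j) = (∏ j ∈ s, (x - a j)) * (x - a i)⁻¹ := by
  rw [eq_mul_inv_iff_mul_eq₀ (sub_ne_zero.2 (hx i hi)), prod_erase_mul _ _ hi]

theorem eval_derivative_prod_X_sub_C (hx : ∀ i ∈ s, x ≠ a i) :
    (derivative (∏ i ∈ s, (X - C (a i)))).eval x =
      (∏ i ∈ s, (X - C (a i))).eval x * ∑ i ∈ s, (x - a i)⁻¹ := by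
  simp only [derivative_prod_finset, derivative_X_sub_C, mul_one, eval_finsetSum, eval_prod,
    eval_sub, eval_X, eval_C, mul_sum]
  exact sum_congr rfl fun i hi => prod_erase_sub_eq_mul_inv hx hi

theorem eval_derivative_derivative_prod_X_sub_C (hx : ∀ i ∈ s, x ≠ a i) :
    (derivative (derivative (∏ i ∈ s, (X - C (a i))))).eval x =
      (∏ i ∈ s, (X - C (a i))).eval x *
        ((∑ i ∈ s, (x - a i)⁻¹) ^ 2 - ∑ i ∈ s, ((x - a i)⁻¹) ^ 2) := by
  simp only [derivative_prod_finset (s := s), derivative_X_sub_C, mul_one, derivative_sum,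
    eval_finsetSum]
  rw [sum_congr rfl fun i hi => eval_derivative_prod_X_sub_C fun j hj => hx j (mem_of_mem_erase hj)]
  simp only [eval_prod, eval_sub, eval_X, eval_C]
  set P := ∏ i ∈ s, (x - a i)
  set S := ∑ i ∈ s, (x - a i)⁻¹
  calc ∑ i ∈ s, (∏ j ∈ s.erase i, (x - a j)) * ∑ j ∈ s.erase i, (x - a j)⁻¹
      = ∑ i ∈ s, (P * S * (x - a i)⁻¹ - P * ((x - a i)⁻¹) ^ 2) := by
        refine sum_congr rfl fun i hi => ?_
        rw [prod_erase_sub_eq_mul_inv hx hi, sum_erase_eq_sub hi]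
        ring
    _ = P * (S ^ 2 - ∑ i ∈ s, ((x - a i)⁻¹) ^ 2) := by
        rw [sum_sub_distrib, ← mul_sum, ← mul_sum]
        ring

end ReciprocalPowerSums

namespace Complex

theorem one_sub_exp_two_mul_mul_I (θ : ℂ) :
    1 - exp (2 * θ * I) = -2 * I * sin θ * exp (θ * I) := by
  rw [exp_mul_I, exp_mul_I, cos_two_mul, sin_two_mul]
  linear_combination 2 * sin θ ^ 2 * I_sq - 2 * sin_sq_add_cos_sq θ

theorem inv_sin_sq_eq (θ : ℂ) (h : sin θ ≠ 0) :
    (sin θ ^ 2)⁻¹ = 4 * (1 - exp (2 * θ * I))⁻¹ - 4 * ((1 - exp (2 * θ * I))⁻¹) ^ 2 := by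
  have hw := one_sub_exp_two_mul_mul_I θ
  have he : exp (2 * θ * I) = exp (θ * I) ^ 2 := by
    rw [← exp_nat_mul]; ring_nf
  have hw0 : 1 - exp (2 * θ * I) ≠ 0 := by
    rw [hw]; exact mul_ne_zero (mul_ne_zero (by simp) h) (exp_ne_zero _)
  field_simp
  linear_combination (1 - exp (2 * θ * I) - 2 * I * sin θ * exp (θ * I)) * hw
    + 4 * sin θ ^ 2 * exp (θ * I) ^ 2 * I_sq + 4 * sin θ ^ 2 * he

end Complex

noncomputable def oddAngle (n k : ℕ) : ℝ := (2 * k + 1) * π / (2 * n)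

section OddAngle

variable {n k : ℕ}

theorem sin_oddAngle_pos (hk : k < n) : 0 < sin (oddAngle n k) := by
  have hn : (0 : ℝ) < n := by exact_mod_cast hk.pos
  have hk' : (k : ℝ) + 1 ≤ n := by exact_mod_cast hk
  apply sin_pos_of_pos_of_lt_pi (by unfold oddAngle; positivity)
  rw [oddAngle, div_lt_iff₀ (by positivity)]
  nlinarith [pi_pos]

theorem sin_oddAngle_reflect (hk : k < n) : sin (oddAngle n (n - 1 - k)) = sin (oddAngle n k) := by
  have hn : (n : ℝ) ≠ 0 := by exact_mod_cast hk.ne_bot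
  rw [← sin_pi_sub, oddAngle, oddAngle, Nat.cast_sub (by omega), Nat.cast_sub (by omega)]
  congr 1
  field_simp
  push_cast
  ring

theorem prod_X_sub_C_exp_oddAngle (hn : n ≠ 0) :
    ∏ k ∈ range n, (X - C (Complex.exp (2 * oddAngle n k * Complex.I))) = X ^ n + 1 := by
  have hn' : (n : ℂ) ≠ 0 := Nat.cast_ne_zero.mpr hn
  have hα : Complex.exp (π * Complex.I / n) ^ n = -1 := by
    rw [← Complex.exp_nat_mul, mul_div_cancel₀ _ hn', Complex.exp_pi_mul_I]
  rw [← sub_neg_eq_add, ← map_one C, ← map_neg,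
    X_pow_sub_C_eq_prod (Complex.isPrimitiveRoot_exp n hn) (Nat.pos_of_ne_zero hn) hα]
  refine prod_congr rfl fun k _ => ?_
  rw [oddAngle, ← Complex.exp_nat_mul, ← Complex.exp_add]
  congr 2
  push_cast
  field_simp

end OddAngle

theorem sum_inv_sin_oddAngle_sq (n : ℕ) :
    ∑ k ∈ range n, (sin (oddAngle n k) ^ 2)⁻¹ = (n : ℝ) ^ 2 := by
  rcases Nat.eq_zero_or_pos n with rfl | hn
  · simp
  set z : ℕ → ℂ := fun k => Complex.exp (2 * oddAngle n k * Complex.I)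
  have hsin : ∀ k ∈ range n, Complex.sin (oddAngle n k) ≠ 0 := fun k hk => by
    exact_mod_cast (sin_oddAngle_pos (mem_range.1 hk)).ne'
  have hz : ∀ k ∈ range n, (1 : ℂ) ≠ z k := fun k hk => by
    rw [← sub_ne_zero, Complex.one_sub_exp_two_mul_mul_I]
    exact mul_ne_zero (mul_ne_zero (by simp) (hsin k hk)) (Complex.exp_ne_zero _)
  have hP := prod_X_sub_C_exp_oddAngle hn.ne'
  have h1 := eval_derivative_prod_X_sub_C hz
  have h2 := eval_derivative_derivative_prod_X_sub_C hz
  simp only [z, hP, derivative_add, derivative_one, add_zero, derivative_X_pow, derivative_C_mul,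
    eval_add, eval_one, eval_mul, eval_C, eval_pow, eval_X, one_pow, mul_one,
    Nat.cast_pred hn] at h1 h2
  set S := ∑ k ∈ range n, (1 - Complex.exp (2 * oddAngle n k * Complex.I))⁻¹
  apply Complex.ofReal_injective
  push_cast
  rw [sum_congr rfl fun k hk => Complex.inv_sin_sq_eq _ (hsin k hk), sum_sub_distrib, ← mul_sum,
    ← mul_sum]
  linear_combination (n + 2 * S - 2) * h1 - 2 * h2

theorem Finset.sum_range_add_self_of_reflect {M : Type*} [AddCommMonoid M] {f : ℕ → M} {m : ℕ}
    (hf : ∀ k < m, f (m + m - 1 - k) = f k) :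
    ∑ k ∈ range (m + m), f k = 2 • ∑ k ∈ range m, f k := by
  rw [sum_range_add, two_nsmul, ← sum_range_reflect (fun k => f (m + k))]
  congr 1
  refine sum_congr rfl fun k hk => ?_
  rw [← hf k (mem_range.1 hk)]
  congr 1
  have hkm := mem_range.1 hk
  omega

theorem stmt9_general (n : ℕ) (hn : Even n) :
    ∑ k ∈ Finset.range (n / 2),
      1 / (Real.sin ((2 * (k : ℝ) + 1) * π / (2 * n))) ^ 2 = (n : ℝ) ^ 2 / 2 := by
  obtain ⟨m, rfl⟩ := hn
  have hfull := sum_inv_sin_oddAngle_sq (m + m)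
  rw [sum_range_add_self_of_reflect fun k hk => by rw [sin_oddAngle_reflect (by omega)],
    nsmul_eq_mul] at hfull
  rw [show (m + m) / 2 = m by omega]
  simp only [one_div]
  change ∑ k ∈ range m, (sin (oddAngle (m + m) k) ^ 2)⁻¹ = _
  push_cast at hfull ⊢
  linarith

theorem stmt9 (n : ℕ) (hn : Even n) (hn2 : 2 ≤ n) :
    ∑ k ∈ Finset.range (n / 2),
      1 / (Real.sin ((2 * (k : ℝ) + 1) * π / (2 * n))) ^ 2 = (n : ℝ) ^ 2 / 2 :=
  stmt9_general n hn
end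

section
/- For every natural number n ≥ 2 and integer p with gcd(p, n) = 1, ∑_{ℓ=1}^{n-1} 1/sin²(pℓπ/n) = (n² - 1)/3. -/
/-!
With `ω = exp (2πi p / n)`, a primitive `n`-th root of unity as `gcd(p, n) = 1`, one has
`(1 - ω^ℓ)(1 - ω^{-ℓ}) = 4 sin²(pℓπ/n)`, so it suffices to show that
`∑_{ℓ=1}^{n-1} 1/((1 - ω^ℓ)(1 - ω^{-ℓ})) = (n² - 1)/12`. For `z^n = 1`, `z ≠ 1` we have
`1/(1 - z) = -(1/n) ∑_{k<n} k z^k`. By orthogonality of the characters `ℓ ↦ ω^{kℓ}` (Parseval)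
the product of the expansions at `ω^ℓ` and `ω^{-ℓ}`, summed over all `ℓ < n`, is `(1/n) ∑ k²`;
subtracting the term `ℓ = 0`, namely `((1/n) ∑ k)²`, leaves `(n² - 1)/12`.
-/

open Finset

theorem mul_sum_range_natCast_mul_pow {R : Type*} [CommRing R] (z : R) (n : ℕ) :
    (1 - z) * ∑ k ∈ range n, (k : R) * z ^ k = z * ∑ k ∈ range n, z ^ k - n * z ^ n := by
  induction n with
  | zero => simp
  | succ n ih => rw [sum_range_succ, sum_range_succ, mul_add, ih]; push_cast; ring

theorem sum_range_natCast_mul_two {R : Type*} [CommRing R] (n : ℕ) :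
    (∑ k ∈ range n, (k : R)) * 2 = n * (n - 1) := by
  induction n with
  | zero => simp
  | succ n ih => rw [sum_range_succ, add_mul, ih]; push_cast; ring

theorem sum_range_natCast_sq_mul_six {R : Type*} [CommRing R] (n : ℕ) :
    (∑ k ∈ range n, (k : R) ^ 2) * 6 = n * (n - 1) * (2 * n - 1) := by
  induction n with
  | zero => simp
  | succ n ih => rw [sum_range_succ, add_mul, ih]; push_cast; ring

section Field

variable {K : Type*} [Field K]

theorem geom_sum_eq_zero_of_pow_eq_one {z : K} {n : ℕ} (hz : z ^ n = 1) (hz1 : z ≠ 1) :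
    ∑ i ∈ range n, z ^ i = 0 := by
  have h := mul_neg_geom_sum z n
  rw [hz, sub_self] at h
  exact (mul_eq_zero.mp h).resolve_left (sub_ne_zero.mpr hz1.symm)

theorem inv_one_sub_eq_of_pow_eq_one {z : K} {n : ℕ} (hn : (n : K) ≠ 0) (hz : z ^ n = 1)
    (hz1 : z ≠ 1) : (1 - z)⁻¹ = -(∑ k ∈ range n, (k : K) * z ^ k) / n := by
  have h := mul_sum_range_natCast_mul_pow z n
  rw [geom_sum_eq_zero_of_pow_eq_one hz hz1, hz] at h
  have hz1' : 1 - z ≠ 0 := sub_ne_zero.mpr hz1.symm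
  rw [eq_div_iff hn, inv_mul_eq_iff_eq_mul₀ hz1']
  linear_combination h

namespace IsPrimitiveRoot

variable {ω : K} {n : ℕ}

theorem sum_pow_mul_inv_pow (hω : IsPrimitiveRoot ω n) {k j : ℕ} (hk : k < n) (hj : j < n) :
    ∑ l ∈ range n, (ω ^ k * ω⁻¹ ^ j) ^ l = if k = j then (n : K) else 0 := by
  have hω0 : ω ≠ 0 := hω.ne_zero (by omega)
  split_ifs with hkj
  · simp [hkj, mul_inv_cancel₀ (pow_ne_zero j hω0)]
  · refine geom_sum_eq_zero_of_pow_eq_one ?_ ?_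
    · simp only [mul_pow, inv_pow, pow_right_comm ω _ n, hω.pow_eq_one, one_pow, inv_one,
        mul_one]
    · rw [inv_pow, Ne, mul_inv_eq_one₀ (pow_ne_zero _ hω0)]
      exact fun h => hkj (hω.pow_inj hk hj h)

theorem sum_mul_sum_inv (hω : IsPrimitiveRoot ω n) (a b : ℕ → K) :
    ∑ l ∈ range n,
        (∑ k ∈ range n, a k * (ω ^ l) ^ k) * (∑ j ∈ range n, b j * (ω⁻¹ ^ l) ^ j) =
      n * ∑ k ∈ range n, a k * b k := by
  calc _ = ∑ k ∈ range n, ∑ j ∈ range n,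
        a k * b j * ∑ l ∈ range n, (ω ^ k * ω⁻¹ ^ j) ^ l := by
        simp_rw [sum_mul_sum, mul_sum]
        rw [sum_comm]
        refine sum_congr rfl fun k _ => ?_
        rw [sum_comm]
        refine sum_congr rfl fun j _ => sum_congr rfl fun l _ => ?_
        ring
    _ = ∑ k ∈ range n, a k * b k * n := by
        refine sum_congr rfl fun k hk => ?_
        rw [sum_congr rfl fun j hj => by
          rw [hω.sum_pow_mul_inv_pow (mem_range.mp hk) (mem_range.mp hj)]]
        simp [mul_ite, hk]
    _ = _ := by rw [mul_sum]; exact sum_congr rfl fun k _ => mul_comm _ _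

theorem sum_inv_one_sub_pow_mul_one_sub_inv_pow [CharZero K] (hω : IsPrimitiveRoot ω n)
    (hn : n ≠ 0) :
    ∑ l ∈ Icc 1 (n - 1), ((1 - ω ^ l) * (1 - ω⁻¹ ^ l))⁻¹ = ((n : K) ^ 2 - 1) / 12 := by
  have hnK : (n : K) ≠ 0 := Nat.cast_ne_zero.mpr hn
  set F : K → K := fun z => ∑ k ∈ range n, (k : K) * z ^ k
  have hexpand : ∀ {ζ : K}, IsPrimitiveRoot ζ n →
      ∀ l ∈ Icc 1 (n - 1), (1 - ζ ^ l)⁻¹ = -F (ζ ^ l) / n :=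
    fun hζ l hl => inv_one_sub_eq_of_pow_eq_one hnK
      (by rw [pow_right_comm, hζ.pow_eq_one, one_pow])
      (hζ.pow_ne_one_of_pos_of_lt (by grind) (by grind))
  have hsplit : ∑ l ∈ range n, F (ω ^ l) * F (ω⁻¹ ^ l) =
      F 1 * F 1 + ∑ l ∈ Icc 1 (n - 1), F (ω ^ l) * F (ω⁻¹ ^ l) := by
    rw [sum_range_eq_add_Ico _ (Nat.pos_of_ne_zero hn),
      Icc_sub_one_right_eq_Ico_of_not_isMin (by simpa using hn)]
    simp
  have hparseval := hω.sum_mul_sum_inv (fun k => (k : K)) (fun k => (k : K))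
  have h1 := sum_range_natCast_mul_two (R := K) n
  have h2 := sum_range_natCast_sq_mul_six (R := K) n
  calc _ = (∑ l ∈ Icc 1 (n - 1), F (ω ^ l) * F (ω⁻¹ ^ l)) / n ^ 2 := by
        rw [sum_div]
        refine sum_congr rfl fun l hl => ?_
        rw [mul_inv, hexpand hω l hl, hexpand hω.inv l hl]
        ring
    _ = (n * ∑ k ∈ range n, (k : K) ^ 2 - (∑ k ∈ range n, (k : K)) ^ 2) / n ^ 2 := by
        congr 1
        simp only [F, one_pow, mul_one, ← sq] at hsplit hparseval
        linear_combination hparseval - hsplit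
    _ = _ := by
        rw [div_eq_div_iff (pow_ne_zero 2 hnK) (by norm_num)]
        linear_combination (2 * (n : K)) * h2 -
          3 * (2 * ∑ k ∈ range n, (k : K) + n * (n - 1)) * h1

end IsPrimitiveRoot

end Field

theorem Complex.one_sub_exp_mul_one_sub_exp_neg (x : ℂ) :
    (1 - exp (2 * x * I)) * (1 - exp (-(2 * x * I))) = 4 * sin x ^ 2 := by
  have h : exp (x * I) * exp (-x * I) = 1 := by rw [← exp_add]; simp
  rw [sin, show 2 * x * I = x * I + x * I by ring, show -(x * I + x * I) = -x * I + -x * I by ring,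
    exp_add, exp_add]
  linear_combination (exp (x * I) * exp (-x * I) - 1) * h - (exp (-x * I) - exp (x * I)) ^ 2 * I_sq

open Real

theorem stmt10 (n : ℕ) (hn : 2 ≤ n) (p : ℤ) (hp : Int.gcd p n = 1) :
    ∑ l ∈ Finset.Icc 1 (n - 1),
      1 / (Real.sin ((p : ℝ) * l * π / n)) ^ 2 = ((n : ℝ) ^ 2 - 1) / 3 := by
  set ω := Complex.exp (2 * π * Complex.I / n) ^ p
  have hω : IsPrimitiveRoot ω n :=
    (Complex.isPrimitiveRoot_exp n (by omega)).zpow_of_gcd_eq_one p hp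
  have hterm : ∀ l : ℕ, ((1 / sin (p * l * π / n) ^ 2 : ℝ) : ℂ) =
      4 * ((1 - ω ^ l) * (1 - ω⁻¹ ^ l))⁻¹ := by
    intro l
    have hωl : ω ^ l = Complex.exp (2 * ((p * l * π / n : ℝ) : ℂ) * Complex.I) := by
      rw [← zpow_natCast, ← zpow_mul, ← Complex.exp_int_mul]
      push_cast
      ring_nf
    rw [inv_pow, hωl, ← Complex.exp_neg, Complex.one_sub_exp_mul_one_sub_exp_neg, mul_inv,
      ← mul_assoc, mul_inv_cancel₀ (by norm_num : (4 : ℂ) ≠ 0), one_mul]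
    push_cast
    rw [one_div]
  apply Complex.ofReal_injective
  rw [Complex.ofReal_sum, sum_congr rfl fun l _ => hterm l, ← mul_sum,
    hω.sum_inv_one_sub_pow_mul_one_sub_inv_pow (by omega)]
  push_cast
  ring
end

section
/- For every even natural number n ≥ 2 and odd integer p with gcd(p, n/2) = 1, ∑_{k=0}^{n/2 - 1} 1/sin²(p(2k+1)π/n) = n²/4. -/
/-!
Put `ζ = exp (π i p / m)` with `n = 2m`; since `p` is odd and prime to `m`, `ζ` is a primitive
`2m`-th root of unity, and the `w = ζ ^ (2k + 1)`, `k < m`, are the roots of `X ^ m = -1`.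
In terms of `w = exp (2 i θ)` one has `1 / sin² θ = -4 w / (w - 1)²`, and `w ^ m = -1` gives
`2 / (1 - w) = ∑_{j < m} w ^ j`, so `4 w / (w - 1)² = ∑_{j, l < m} w ^ (j + l + 1)`.
Summing over the roots, the power sum `∑_w w ^ s` (`0 < s < 2m`) is `-m` for `s = m` and `0`
otherwise, and exactly `m` pairs `(j, l)` have `j + l + 1 = m`.
-/

open Real Finset

namespace IsPrimitiveRoot

variable {R : Type*} [CommRing R] [IsDomain R] {ζ : R} {m : ℕ}

theorem pow_half_eq_neg_one (hζ : IsPrimitiveRoot ζ (2 * m)) (hm : m ≠ 0) : ζ ^ m = -1 :=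
  eq_neg_one_of_two_right <| by simpa [hm] using hζ.pow_of_dvd hm (dvd_mul_left m 2)

theorem sum_range_odd_pow_pow (hζ : IsPrimitiveRoot ζ (2 * m)) {s : ℕ}
    (hs₀ : 0 < s) (hs : s < 2 * m) :
    ∑ k ∈ range m, (ζ ^ (2 * k + 1)) ^ s = if s = m then -(m : R) else 0 := by
  have hsplit : ∀ k, (ζ ^ (2 * k + 1)) ^ s = ζ ^ s * (ζ ^ (2 * s)) ^ k := fun k => by
    rw [← pow_mul, ← pow_mul, ← pow_add]; ring_nf
  rw [sum_congr rfl fun k _ => hsplit k, ← mul_sum]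
  split_ifs with hsm
  · subst hsm
    simp [hζ.pow_eq_one, hζ.pow_half_eq_neg_one hs₀.ne']
  · have hq : ζ ^ (2 * s) ≠ 1 := by
      rw [Ne, hζ.pow_eq_one_iff_dvd, Nat.mul_dvd_mul_iff_left two_pos]
      rintro ⟨d, rfl⟩
      have : d = 1 := by nlinarith
      simp_all
    have hqm : (ζ ^ (2 * s)) ^ m = 1 := by
      rw [← pow_mul, mul_right_comm, pow_mul, hζ.pow_eq_one, one_pow]
    refine mul_eq_zero_of_right _ <|
      eq_zero_of_ne_zero_of_mul_left_eq_zero (sub_ne_zero.2 hq.symm) ?_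
    rw [mul_neg_geom_sum, hqm, sub_self]

end IsPrimitiveRoot

theorem four_mul_div_sub_one_sq_eq_sum_sum {K : Type*} [Field K] {w : K} {m : ℕ}
    (hw : w ^ m = -1) (h2 : (2 : K) ≠ 0) :
    4 * (w / (w - 1) ^ 2) = ∑ j ∈ range m, ∑ l ∈ range m, w ^ (j + l + 1) := by
  have hG : (∑ j ∈ range m, w ^ j) * (w - 1) = -2 := by
    rw [geom_sum_mul, hw]; ring
  have hw1 : w - 1 ≠ 0 := by
    rintro h
    rw [h, mul_zero, zero_eq_neg] at hG
    exact h2 hG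
  have hgeom : 4 / (w - 1) ^ 2 = (∑ j ∈ range m, w ^ j) ^ 2 := by
    rw [div_eq_iff (pow_ne_zero 2 hw1), ← mul_pow, hG]
    ring
  rw [mul_div_left_comm, hgeom, sq, sum_mul_sum, mul_sum]
  refine sum_congr rfl fun j _ => (mul_sum _ _ _).trans (sum_congr rfl fun l _ => ?_)
  ring

theorem IsPrimitiveRoot.four_mul_sum_odd_pow_div_sub_one_sq {K : Type*} [Field K] {ζ : K}
    {m : ℕ} (hζ : IsPrimitiveRoot ζ (2 * m)) :
    4 * ∑ k ∈ range m, ζ ^ (2 * k + 1) / (ζ ^ (2 * k + 1) - 1) ^ 2 = -(m : K) ^ 2 := by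
  rcases Nat.eq_zero_or_pos m with rfl | hm
  · simp
  have hneg := hζ.pow_half_eq_neg_one hm.ne'
  have h2 : (2 : K) ≠ 0 := fun h => hζ.pow_ne_one_of_pos_of_lt hm.ne' (by omega) <| by
    rw [hneg]; linear_combination -h
  have hroot : ∀ k, (ζ ^ (2 * k + 1)) ^ m = -1 := fun k => by
    rw [← pow_mul, mul_comm, pow_mul, hneg, Odd.neg_one_pow ⟨k, rfl⟩]
  have hpair : ∀ j ∈ range m, ∑ l ∈ range m, ∑ k ∈ range m,
      (ζ ^ (2 * k + 1)) ^ (j + l + 1) = -(m : K) := fun j hj => by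
    have hl : ∀ l ∈ range m, ∑ k ∈ range m, (ζ ^ (2 * k + 1)) ^ (j + l + 1) =
        if l = m - 1 - j then -(m : K) else 0 := fun l hl => by
      rw [mem_range] at hj hl
      rw [hζ.sum_range_odd_pow_pow (by omega) (by omega)]
      exact if_congr (by omega) rfl rfl
    rw [sum_congr rfl hl, sum_ite_eq', if_pos (mem_range.2 (by omega))]
  calc 4 * ∑ k ∈ range m, ζ ^ (2 * k + 1) / (ζ ^ (2 * k + 1) - 1) ^ 2
      = ∑ k ∈ range m, ∑ j ∈ range m, ∑ l ∈ range m, (ζ ^ (2 * k + 1)) ^ (j + l + 1) := by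
        simp only [mul_sum, four_mul_div_sub_one_sq_eq_sum_sum (hroot _) h2]
    _ = ∑ j ∈ range m, ∑ l ∈ range m, ∑ k ∈ range m, (ζ ^ (2 * k + 1)) ^ (j + l + 1) := by
        rw [sum_comm]; exact sum_congr rfl fun j _ => sum_comm
    _ = -(m : K) ^ 2 := by simp [sum_congr rfl hpair, sq]

-- Also true where `sin θ = 0`: then both sides are junk `0`.
theorem Complex.one_div_sin_sq_s12 (θ : ℂ) :
    1 / Complex.sin θ ^ 2 =
      -4 * (Complex.exp (2 * θ * Complex.I) / (Complex.exp (2 * θ * Complex.I) - 1) ^ 2) := by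
  have hu : Complex.exp (θ * Complex.I) ≠ 0 := Complex.exp_ne_zero _
  have hsq : Complex.exp (2 * θ * Complex.I) = Complex.exp (θ * Complex.I) ^ 2 := by
    rw [← Complex.exp_nat_mul]; ring_nf
  have hsub : Complex.exp (2 * θ * Complex.I) - 1 =
      Complex.exp (θ * Complex.I) * (2 * Complex.I * Complex.sin θ) := by
    rw [hsq, Complex.sin, neg_mul, Complex.exp_neg]
    field_simp
    ring_nf
    simp [Complex.I_sq]
  rw [hsub, hsq, mul_pow, mul_pow, mul_pow, Complex.I_sq]
  rcases eq_or_ne (Complex.sin θ) 0 with h | h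
  · simp [h]
  · field_simp
    ring

theorem stmt12_general (n : ℕ) (hn : Even n) (p : ℤ) (hpo : Odd p)
    (hp : Int.gcd p (n / 2) = 1) :
    ∑ k ∈ Finset.range (n / 2),
      1 / (Real.sin ((p : ℝ) * (2 * k + 1) * π / n)) ^ 2 = (n : ℝ) ^ 2 / 4 := by
  obtain ⟨m, rfl⟩ := hn
  rcases Nat.eq_zero_or_pos m with rfl | hm
  · simp
  have hhalf : ((m + m : ℕ) : ℤ) / 2 = m := by push_cast; omega
  rw [hhalf] at hp
  rw [show (m + m) / 2 = m by omega]
  have hcop : Int.gcd p (2 * m : ℕ) = 1 := by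
    rw [← Int.isCoprime_iff_gcd_eq_one, Nat.cast_mul]
    exact (Int.isCoprime_two_right.2 hpo).mul_right (Int.isCoprime_iff_gcd_eq_one.2 hp)
  have hζ := (Complex.isPrimitiveRoot_exp (2 * m) (by omega)).zpow_of_gcd_eq_one p hcop
  have hpow : ∀ k : ℕ, (Complex.exp (2 * π * Complex.I / (2 * m : ℕ)) ^ p) ^ (2 * k + 1) =
      Complex.exp (2 * ((p : ℝ) * (2 * k + 1) * π / (m + m : ℕ) : ℝ) * Complex.I) := fun k => by
    rw [← zpow_natCast, ← zpow_mul, ← Complex.exp_int_mul]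
    congr 1
    push_cast
    ring
  have key := hζ.four_mul_sum_odd_pow_div_sub_one_sq
  simp_rw [hpow] at key
  apply Complex.ofReal_injective
  push_cast [Complex.one_div_sin_sq_s12, ← mul_sum] at key ⊢
  linear_combination -key

theorem stmt12 (n : ℕ) (hn : Even n) (hn2 : 2 ≤ n) (p : ℤ) (hpo : Odd p)
    (hp : Int.gcd p (n / 2) = 1) :
    ∑ k ∈ Finset.range (n / 2),
      1 / (Real.sin ((p : ℝ) * (2 * k + 1) * π / n)) ^ 2 = (n : ℝ) ^ 2 / 4 :=
  stmt12_general n hn p hpo hp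
end

section
/- For every odd natural number n ≥ 3 and positive integer j with gcd(j, n) = 1, ∑_{k=0}^{(n-3)/2} [sin((j+1)(2k+1)π/n) · sin((j-1)(2k+1)π/n)] / [sin²((2k+1)π/n) · sin²(j(2k+1)π/n)] = 0. -/
/-!
With x = (2k+1)π/n, the identity sin(jx + x) sin(jx - x) = sin²(jx) - sin²x turns the
summand into csc²x - csc²(jx). Since csc² is even and π-periodic, g(r) = csc²(rπ/n) is an
even function on ZMod n. The odd residues 1, 3, …, n - 2 and their negatives are exactly the
nonzero residues, so for any even g, ∑_r g(r) = g(0) + 2 ∑_k g(2k+1). Multiplication by the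
unit j permutes ZMod n and preserves evenness, hence ∑_k g(j(2k+1)) = ∑_k g(2k+1).
-/

open Real Finset

theorem Real.sin_add_mul_sin_sub (x y : ℝ) :
    sin (x + y) * sin (x - y) = sin x ^ 2 - sin y ^ 2 := by
  rw [sin_add, sin_sub]
  linear_combination sin x ^ 2 * sin_sq_add_cos_sq y - sin y ^ 2 * sin_sq_add_cos_sq x

theorem Real.sin_add_mul_sin_sub_div (x y : ℝ) (hx : sin x ≠ 0) (hy : sin y ≠ 0) :
    sin (y + x) * sin (y - x) / (sin x ^ 2 * sin y ^ 2) = (sin x ^ 2)⁻¹ - (sin y ^ 2)⁻¹ := by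
  rw [sin_add_mul_sin_sub]
  field_simp

theorem Real.sin_nat_mul_pi_div_ne_zero {n m : ℕ} (hn : n ≠ 0) (hm : ¬ n ∣ m) :
    sin (m * π / n) ≠ 0 := by
  rw [Ne, sin_eq_zero_iff]
  rintro ⟨k, hk⟩
  have hkn : (k * n : ℝ) = m := by
    field_simp at hk
    linarith [hk]
  exact hm (Int.natCast_dvd_natCast.mp ⟨k, by exact_mod_cast hkn.symm.trans (mul_comm _ _)⟩)

theorem Finset.sum_range_two_mul_add_one {M : Type*} [AddCommMonoid M] (h : ℕ → M) (q : ℕ) :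
    ∑ m ∈ range (2 * q + 1), h m =
      h 0 + ∑ k ∈ range q, (h (2 * k + 1) + h (2 * k + 2)) := by
  induction q with
  | zero => simp
  | succ q ih =>
    rw [show 2 * (q + 1) + 1 = 2 * q + 1 + 1 + 1 by ring, sum_range_succ, sum_range_succ, ih,
      sum_range_succ, add_assoc, add_assoc]

theorem ZMod.sum_eq_sum_range {M : Type*} [AddCommMonoid M] (n : ℕ) [NeZero n]
    (g : ZMod n → M) : ∑ r, g r = ∑ m ∈ range n, g m :=
  sum_nbij' ZMod.val ((↑) : ℕ → ZMod n) (fun r _ ↦ mem_range.mpr r.val_lt)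
    (fun _ _ ↦ mem_univ _)
    (fun r _ ↦ ZMod.natCast_zmod_val r) (fun _ hm ↦ ZMod.val_cast_of_lt (mem_range.mp hm))
    (fun r _ ↦ by rw [ZMod.natCast_zmod_val])

theorem ZMod.sum_eq_add_two_nsmul_sum_odd {M : Type*} [AddCommMonoid M] {n : ℕ} [NeZero n]
    (hn : Odd n) (g : ZMod n → M) (hg : ∀ r, g (-r) = g r) :
    ∑ r, g r = g 0 + 2 • ∑ k ∈ range (n / 2), g ((2 * k + 1 : ℕ) : ZMod n) := by
  obtain ⟨q, rfl⟩ := hn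
  have hq : (2 * q + 1) / 2 = q := by omega
  rw [ZMod.sum_eq_sum_range, hq, sum_range_two_mul_add_one, two_nsmul, sum_add_distrib]
  congr 2
  rw [← sum_range_reflect]
  refine sum_congr rfl fun k hk ↦ ?_
  have hk := mem_range.mp hk
  rw [← hg]
  congr 1
  rw [neg_eq_iff_add_eq_zero, ← Nat.cast_add, ← ZMod.natCast_self]
  congr 1
  omega

theorem ZMod.sum_odd_comp_mul_unit {M : Type*} [AddCommGroup M] [IsAddTorsionFree M] {n : ℕ}
    [NeZero n] (hn : Odd n) (g : ZMod n → M) (hg : ∀ r, g (-r) = g r) (u : (ZMod n)ˣ) :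
    ∑ k ∈ range (n / 2), g (u * (2 * k + 1 : ℕ)) =
      ∑ k ∈ range (n / 2), g (2 * k + 1 : ℕ) := by
  have hsum : ∑ r, g (u * r) = ∑ r, g r := Equiv.sum_comp (Units.mulLeft u) g
  rw [sum_eq_add_two_nsmul_sum_odd hn g hg,
    sum_eq_add_two_nsmul_sum_odd hn (fun r ↦ g (u * r)) (fun r ↦ by simp only [mul_neg, hg]),
    mul_zero] at hsum
  exact nsmul_right_injective two_ne_zero (add_left_cancel hsum)

noncomputable def invSinSq (n : ℕ) (r : ZMod n) : ℝ := (sin (r.val * π / n) ^ 2)⁻¹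

section
variable {n : ℕ} [NeZero n]

theorem invSinSq_natCast (m : ℕ) : invSinSq n m = (sin (m * π / n) ^ 2)⁻¹ := by
  have hn : (n : ℝ) ≠ 0 := NeZero.ne _
  have hm : (m : ℝ) * π / n = (m % n : ℕ) * π / n + (m / n : ℕ) * π := by
    conv_lhs => rw [← Nat.mod_add_div m n]
    field_simp
    push_cast
    ring
  rw [invSinSq, ZMod.val_natCast, hm, sin_add_nat_mul_pi, mul_pow, ← pow_mul,
    pow_mul', neg_one_sq, one_pow, one_mul]

theorem invSinSq_neg (r : ZMod n) : invSinSq n (-r) = invSinSq n r := by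
  rcases eq_or_ne r 0 with rfl | hr
  · rw [neg_zero]
  have hn : (n : ℝ) ≠ 0 := NeZero.ne _
  rw [invSinSq, invSinSq, ZMod.neg_val, if_neg hr, Nat.cast_sub r.val_le, sub_mul, sub_div,
    mul_div_cancel_left₀ _ hn, sin_pi_sub]
end

theorem stmt15_general (n : ℕ) (hn : Odd n) (hn3 : 3 ≤ n) (j : ℕ)
    (hgcd : Nat.gcd j n = 1) :
    ∑ k ∈ Finset.range ((n - 3) / 2 + 1),
      Real.sin (((j : ℝ) + 1) * (2 * k + 1) * π / n) *
        Real.sin (((j : ℝ) - 1) * (2 * k + 1) * π / n) /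
        ((Real.sin ((2 * (k : ℝ) + 1) * π / n)) ^ 2 *
          (Real.sin ((j : ℝ) * (2 * k + 1) * π / n)) ^ 2) = 0 := by
  have : NeZero n := ⟨by omega⟩
  set u := ZMod.unitOfCoprime j hgcd
  have hterm : ∀ k ∈ range (n / 2),
      sin ((j + 1) * (2 * k + 1) * π / n) * sin ((j - 1) * (2 * k + 1) * π / n) /
          (sin ((2 * k + 1) * π / n) ^ 2 * sin (j * (2 * k + 1) * π / n) ^ 2) =
        invSinSq n (2 * k + 1 : ℕ) - invSinSq n (u * (2 * k + 1 : ℕ)) := by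
    intro k hk
    have hk : 2 * k + 1 < n := by have := mem_range.mp hk; omega
    have hndvd : ¬ n ∣ 2 * k + 1 := Nat.not_dvd_of_pos_of_lt (by omega) hk
    have hx := sin_nat_mul_pi_div_ne_zero (NeZero.ne n) hndvd
    have hy := sin_nat_mul_pi_div_ne_zero (NeZero.ne n) (m := j * (2 * k + 1))
      fun h ↦ hndvd ((Nat.coprime_comm.mp hgcd).dvd_of_dvd_mul_left h)
    rw [ZMod.coe_unitOfCoprime, ← Nat.cast_mul, invSinSq_natCast, invSinSq_natCast,
      ← sin_add_mul_sin_sub_div _ _ hx hy]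
    push_cast
    ring_nf
  have hlen : (n - 3) / 2 + 1 = n / 2 := by have := Nat.odd_iff.mp hn; omega
  rw [hlen, sum_congr rfl hterm, sum_sub_distrib, sub_eq_zero,
    ZMod.sum_odd_comp_mul_unit hn _ invSinSq_neg]

theorem stmt15 (n : ℕ) (hn : Odd n) (hn3 : 3 ≤ n) (j : ℕ) (hj : 1 ≤ j)
    (hgcd : Nat.gcd j n = 1) :
    ∑ k ∈ Finset.range ((n - 3) / 2 + 1),
      Real.sin (((j : ℝ) + 1) * (2 * k + 1) * π / n) *
        Real.sin (((j : ℝ) - 1) * (2 * k + 1) * π / n) /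
        ((Real.sin ((2 * (k : ℝ) + 1) * π / n)) ^ 2 *
          (Real.sin ((j : ℝ) * (2 * k + 1) * π / n)) ^ 2) = 0 :=
  stmt15_general n hn hn3 j hgcd
end

section
/- For every positive integer k, ∑_{j=0}^{2k-1} (-1)^j sin²((2j+1)π/(8k+2)) = − sin²(2kπ/(4k+1)) / (2 cos(π/(4k+1))). -/
/-!
With `θ = π / (4k + 1)` the summands are `sin² ((2j + 1) θ / 2) = (1 - cos ((2j + 1) θ)) / 2`.
The constant halves cancel in the alternating sum, and multiplying the alternating cosine sum
by `2 cos θ` makes it telescope (`2 cos θ cos ((2j + 1) θ) = cos (2jθ) + cos ((2j + 2) θ)`),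
so `2 cos θ` times the sum is `-(1 - cos (4kθ)) / 2 = -sin² (2kθ)`. Finally `cos θ ≠ 0`, since
`(2n + 1)(4k + 1)` is odd and so never `2`.
-/

open Real Finset

theorem two_cos_mul_sum_neg_one_pow_mul_cos_odd_mul (θ : ℝ) (n : ℕ) :
    2 * cos θ * ∑ j ∈ range n, (-1 : ℝ) ^ j * cos ((2 * j + 1) * θ) =
      1 - (-1 : ℝ) ^ n * cos (2 * n * θ) := by
  induction n with
  | zero => simp
  | succ n ih =>
    rw [sum_range_succ, mul_add, ih]
    have h_next : 2 * ((n : ℝ) + 1) * θ = (2 * n + 1) * θ + θ := by ring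
    have h_prev : 2 * (n : ℝ) * θ = (2 * n + 1) * θ - θ := by ring
    push_cast
    rw [h_next, h_prev, cos_add, cos_sub]
    ring

theorem two_cos_two_mul_mul_sum_neg_one_pow_mul_sin_odd_mul_sq (φ : ℝ) (m : ℕ) :
    2 * cos (2 * φ) * ∑ j ∈ range (2 * m), (-1 : ℝ) ^ j * sin ((2 * j + 1) * φ) ^ 2 =
      -sin (4 * m * φ) ^ 2 := by
  have h_halves : ∑ j ∈ range (2 * m), (-1 : ℝ) ^ j = 0 := by
    simp [neg_one_geom_sum]
  have h_sum : ∑ j ∈ range (2 * m), (-1 : ℝ) ^ j * sin ((2 * j + 1) * φ) ^ 2 =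
      -(∑ j ∈ range (2 * m), (-1 : ℝ) ^ j * cos ((2 * j + 1) * (2 * φ))) / 2 := by
    simp only [sin_sq_eq_half_sub, mul_sub, sum_sub_distrib, ← sum_mul, h_halves]
    rw [zero_mul, zero_sub, neg_div, sum_div]
    exact congrArg _ (sum_congr rfl fun j _ => by ring_nf)
  have h_telescope := two_cos_mul_sum_neg_one_pow_mul_cos_odd_mul (2 * φ) (2 * m)
  rw [(even_two_mul m).neg_one_pow, one_mul] at h_telescope
  rw [h_sum, sin_sq_eq_half_sub]
  have h_angle : 2 * ((2 * m : ℕ) : ℝ) * (2 * φ) = 2 * (4 * m * φ) := by push_cast; ring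
  rw [h_angle] at h_telescope
  linear_combination (-1 / 2 : ℝ) * h_telescope

theorem cos_pi_div_four_mul_add_one_ne_zero (k : ℕ) : cos (π / (4 * k + 1)) ≠ 0 := by
  rw [Ne, cos_eq_zero_iff]
  rintro ⟨n, hn⟩
  have h_two : (2 : ℝ) = (2 * n + 1) * (4 * k + 1) := by
    field_simp at hn
    linear_combination hn
  have h_odd : (2 : ℤ) = 2 * (n * (4 * k + 1) + 2 * k) + 1 := by
    have : (2 : ℤ) = (2 * n + 1) * (4 * k + 1) := by exact_mod_cast h_two
    linear_combination this
  omega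

theorem stmt16_general (k : ℕ) :
    ∑ j ∈ Finset.range (2 * k),
      (-1 : ℝ) ^ j * (Real.sin ((2 * (j : ℝ) + 1) * π / (8 * k + 2))) ^ 2 =
    -(Real.sin (2 * (k : ℝ) * π / (4 * k + 1))) ^ 2 /
      (2 * Real.cos (π / (4 * k + 1))) := by
  have h_double : 2 * (π / (8 * k + 2)) = π / (4 * k + 1) := by field_simp; ring
  have h_rhs : 4 * k * (π / (8 * k + 2)) = 2 * k * π / (4 * k + 1) := by field_simp; ring
  have h_terms (j : ℕ) :
      (2 * (j : ℝ) + 1) * π / (8 * k + 2) = (2 * j + 1) * (π / (8 * k + 2)) := by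
    ring
  have h := two_cos_two_mul_mul_sum_neg_one_pow_mul_sin_odd_mul_sq (π / (8 * k + 2)) k
  rw [h_double, h_rhs] at h
  simp only [h_terms]
  rw [eq_div_iff (mul_ne_zero two_ne_zero (cos_pi_div_four_mul_add_one_ne_zero k)), ← h]
  ring

theorem stmt16 (k : ℕ) (hk : 1 ≤ k) :
    ∑ j ∈ Finset.range (2 * k),
      (-1 : ℝ) ^ j * (Real.sin ((2 * (j : ℝ) + 1) * π / (8 * k + 2))) ^ 2 =
    -(Real.sin (2 * (k : ℝ) * π / (4 * k + 1))) ^ 2 /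
      (2 * Real.cos (π / (4 * k + 1))) :=
  stmt16_general k
end

section
/- For every positive integer n, ∑_{j=1}^{n} 1/sin⁴(jπ/(2n+1)) = 8n(n+1)(n² + n + 3)/45. -/
/-!
The numbers `x_j = cot² (jπ/(2n+1))`, `1 ≤ j ≤ n`, are distinct, and de Moivre's formula
gives `sin ((2n+1)θ) = sin^(2n+1) θ · P(cot² θ)` with `P(x) = ∑ₖ (-1)^(n-k) C(2n+1, 2k) xᵏ`;
hence they are all the roots of `P`. Vieta's formulas give `e₁ = C(2n+1, 3)/(2n+1)` and
`e₂ = C(2n+1, 5)/(2n+1)`, and since `csc⁴ = (1 + cot²)²` the sum equals `n + 2e₁ + e₁² - 2e₂`.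
-/

open Real Finset Polynomial

namespace Multiset

theorem esymm_one {R : Type*} [CommSemiring R] (s : Multiset R) : s.esymm 1 = s.sum := by
  simp [esymm, powersetCard_one]

theorem esymm_cons_succ {R : Type*} [CommSemiring R] (a : R) (s : Multiset R) (k : ℕ) :
    (a ::ₘ s).esymm (k + 1) = s.esymm (k + 1) + a * s.esymm k := by
  simp [esymm, powersetCard_cons, sum_map_mul_left]

theorem sum_map_sq {R : Type*} [CommRing R] (s : Multiset R) :
    (s.map (· ^ 2)).sum = s.sum ^ 2 - 2 * s.esymm 2 := by
  induction s using Multiset.induction_on with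
  | empty => simp [esymm, powersetCard_zero_right]
  | cons a s ih =>
    rw [map_cons, sum_cons, ih, esymm_cons_succ, esymm_one, sum_cons]
    ring

theorem sum_map_one_add_sq {R : Type*} [CommSemiring R] (s : Multiset R) :
    (s.map fun x => (1 + x) ^ 2).sum = card s + 2 * s.sum + (s.map (· ^ 2)).sum := by
  induction s using Multiset.induction_on with
  | empty => simp
  | cons a s ih =>
    simp only [map_cons, sum_cons, card_cons, ih]
    push_cast
    ring

end Multiset

theorem Finset.sum_range_two_mul {M : Type*} [AddCommMonoid M] (f : ℕ → M) (k : ℕ) :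
    ∑ i ∈ range (2 * k), f i = ∑ i ∈ range k, (f (2 * i) + f (2 * i + 1)) := by
  induction k with
  | zero => simp
  | succ k ih =>
    rw [mul_add, mul_one, sum_range_succ, sum_range_succ, sum_range_succ, ih, add_assoc]

theorem add_pow_sub_sub_pow_two_mul_add_one {R : Type*} [CommRing R] (a b : R) (n : ℕ) :
    (a + b) ^ (2 * n + 1) - (a - b) ^ (2 * n + 1) =
      2 * ∑ k ∈ range (n + 1),
        (2 * n + 1).choose (2 * k) * a ^ (2 * k) * b ^ (2 * (n - k) + 1) := by
  rw [sub_eq_add_neg a b, add_pow, add_pow, ← sum_sub_distrib,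
    show 2 * n + 1 + 1 = 2 * (n + 1) by ring, sum_range_two_mul, mul_sum]
  refine sum_congr rfl fun k hk => ?_
  have hk : k ≤ n := Nat.lt_succ_iff.mp (mem_range.mp hk)
  rw [show 2 * n + 1 - 2 * k = 2 * (n - k) + 1 by omega,
    show 2 * n + 1 - (2 * k + 1) = 2 * (n - k) by omega,
    Odd.neg_pow (odd_two_mul_add_one _), Even.neg_pow (even_two_mul _)]
  ring

theorem Complex.sin_two_mul_add_one_mul (n : ℕ) (z : ℂ) :
    sin ((2 * n + 1) * z) = ∑ k ∈ range (n + 1),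
      (-1) ^ (n - k) * (2 * n + 1).choose (2 * k) * cos z ^ (2 * k) *
        sin z ^ (2 * (n - k) + 1) := by
  have h := add_pow_sub_sub_pow_two_mul_add_one (cos z) (sin z * I) n
  have hconj : cos z - sin z * I = cos (-z) + sin (-z) * I := by
    rw [cos_neg, sin_neg]; ring
  rw [hconj, cos_add_sin_mul_I_pow, cos_add_sin_mul_I_pow, mul_neg, cos_neg, sin_neg] at h
  push_cast at h
  apply mul_left_cancel₀ (show (2 : ℂ) * I ≠ 0 by simp)
  calc 2 * I * sin ((2 * n + 1) * z) = _ := by ring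
    _ = _ := h
    _ = _ := by
      rw [mul_sum, mul_sum]
      refine sum_congr rfl fun k _ => ?_
      rw [mul_pow, pow_succ I, pow_mul I, I_sq]
      ring

theorem Real.sin_two_mul_add_one_mul (n : ℕ) (x : ℝ) :
    sin ((2 * n + 1) * x) = ∑ k ∈ range (n + 1),
      (-1) ^ (n - k) * (2 * n + 1).choose (2 * k) * cos x ^ (2 * k) * sin x ^ (2 * (n - k) + 1) :=
  mod_cast Complex.sin_two_mul_add_one_mul n x

theorem Real.one_add_cot_sq {x : ℝ} (hx : sin x ≠ 0) : 1 + cot x ^ 2 = 1 / sin x ^ 2 := by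
  rw [cot_eq_cos_div_sin, div_pow, cos_sq']
  field_simp
  ring

theorem Real.strictAntiOn_cot_sq : StrictAntiOn (fun x => cot x ^ 2) (Set.Ioc 0 (π / 2)) := by
  intro a ha b hb hab
  have hsa : 0 < sin a := sin_pos_of_pos_of_lt_pi ha.1 (by linarith [ha.2, pi_pos])
  have hsab : sin a < sin b :=
    strictMonoOn_sin ⟨by linarith [ha.1, pi_pos], ha.2⟩ ⟨by linarith [hb.1, pi_pos], hb.2⟩ hab
  have hinv : 1 / sin b ^ 2 < 1 / sin a ^ 2 := one_div_lt_one_div_of_lt (by positivity) (by gcongr)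
  have ha' := one_add_cot_sq hsa.ne'
  have hb' := one_add_cot_sq (hsa.trans hsab).ne'
  linarith

noncomputable def cotSqPoly (n : ℕ) : ℝ[X] :=
  ∑ k ∈ range (n + 1), C ((-1 : ℝ) ^ (n - k) * (2 * n + 1).choose (2 * k)) * X ^ k

theorem sin_two_mul_add_one_mul_eq_eval_cotSqPoly {x : ℝ} (hx : sin x ≠ 0) (n : ℕ) :
    sin ((2 * n + 1) * x) = sin x ^ (2 * n + 1) * (cotSqPoly n).eval (cot x ^ 2) := by
  rw [Real.sin_two_mul_add_one_mul, cotSqPoly, eval_finsetSum, mul_sum]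
  refine sum_congr rfl fun k hk => ?_
  have hpow : sin x ^ (2 * n + 1) = sin x ^ (2 * k) * sin x ^ (2 * (n - k) + 1) := by
    rw [← pow_add]; congr 1; have := mem_range.mp hk; omega
  rw [eval_mul, eval_C, eval_pow, eval_X, hpow, cot_eq_cos_div_sin, ← pow_mul, div_pow]
  field_simp

theorem coeff_cotSqPoly {n k : ℕ} (hk : k ≤ n) :
    (cotSqPoly n).coeff k = (-1) ^ (n - k) * (2 * n + 1).choose (2 * k) := by
  simp only [cotSqPoly, finsetSum_coeff, coeff_C_mul_X_pow, sum_ite_eq, mem_range,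
    Nat.lt_succ_iff.mpr hk, if_true]

theorem coeff_cotSqPoly_self (n : ℕ) : (cotSqPoly n).coeff n = 2 * n + 1 := by
  rw [coeff_cotSqPoly le_rfl, Nat.sub_self, pow_zero, one_mul,
    Nat.choose_symm_of_eq_add rfl, Nat.choose_one_right]
  push_cast
  ring

theorem natDegree_cotSqPoly (n : ℕ) : (cotSqPoly n).natDegree = n := by
  apply natDegree_eq_of_le_of_coeff_ne_zero
  · exact natDegree_sum_le_of_forall_le _ _ fun k hk =>
      (natDegree_C_mul_X_pow_le _ _).trans (Nat.lt_succ_iff.mp (mem_range.mp hk))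
  · rw [coeff_cotSqPoly_self]
    positivity

theorem leadingCoeff_cotSqPoly (n : ℕ) : (cotSqPoly n).leadingCoeff = 2 * n + 1 := by
  rw [leadingCoeff, natDegree_cotSqPoly, coeff_cotSqPoly_self]

theorem mul_pi_div_two_mul_add_one_mem_Ioc {n j : ℕ} (hj : j ∈ Icc 1 n) :
    (j : ℝ) * π / (2 * n + 1) ∈ Set.Ioc 0 (π / 2) := by
  obtain ⟨hj1, hjn⟩ := mem_Icc.mp hj
  have hj1' : (1 : ℝ) ≤ j := by exact_mod_cast hj1
  have hjn' : (j : ℝ) ≤ n := by exact_mod_cast hjn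
  constructor
  · positivity
  · rw [div_le_iff₀ (by positivity)]
    nlinarith [pi_pos]

theorem sin_mul_pi_div_two_mul_add_one_pos {n j : ℕ} (hj : j ∈ Icc 1 n) :
    0 < sin (j * π / (2 * n + 1)) := by
  obtain ⟨h0, hle⟩ := mul_pi_div_two_mul_add_one_mem_Ioc hj
  exact sin_pos_of_pos_of_lt_pi h0 (by linarith [pi_pos])

theorem isRoot_cotSqPoly {n j : ℕ} (hj : j ∈ Icc 1 n) :
    (cotSqPoly n).IsRoot (cot (j * π / (2 * n + 1)) ^ 2) := by
  have hs := (sin_mul_pi_div_two_mul_add_one_pos hj).ne'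
  have h := sin_two_mul_add_one_mul_eq_eval_cotSqPoly hs n
  rw [mul_div_cancel₀ _ (by positivity), sin_nat_mul_pi] at h
  exact (mul_eq_zero.mp h.symm).resolve_left (pow_ne_zero _ hs)

theorem strictAntiOn_cot_sq_mul_pi_div (n : ℕ) :
    StrictAntiOn (fun j : ℕ => cot (j * π / (2 * n + 1)) ^ 2) (Icc 1 n : Set ℕ) := by
  intro i hi j hj hij
  refine strictAntiOn_cot_sq (mul_pi_div_two_mul_add_one_mem_Ioc hi)
    (mul_pi_div_two_mul_add_one_mem_Ioc hj) ?_
  gcongr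

theorem roots_cotSqPoly (n : ℕ) :
    (cotSqPoly n).roots = (Icc 1 n).val.map fun j : ℕ => cot (j * π / (2 * n + 1)) ^ 2 := by
  have hne : cotSqPoly n ≠ 0 :=
    leadingCoeff_ne_zero.mp (by rw [leadingCoeff_cotSqPoly]; positivity)
  have hnodup := (Icc 1 n).nodup.map_on fun i hi j hj =>
    (strictAntiOn_cot_sq_mul_pi_div n).injOn hi hj
  symm
  apply Multiset.eq_of_le_of_card_le
  · rw [Multiset.le_iff_subset hnodup]
    intro x hx
    obtain ⟨j, hj, rfl⟩ := Multiset.mem_map.mp hx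
    exact (mem_roots hne).mpr (isRoot_cotSqPoly hj)
  · calc Multiset.card (cotSqPoly n).roots ≤ (cotSqPoly n).natDegree := card_roots' _
      _ = _ := by simp [natDegree_cotSqPoly]

theorem esymm_roots_cotSqPoly (n m : ℕ) :
    (cotSqPoly n).roots.esymm m = (2 * n + 1).choose (2 * m + 1) / (2 * n + 1) := by
  have hcard : Multiset.card (cotSqPoly n).roots = n := by simp [roots_cotSqPoly]
  rcases le_or_gt m n with hm | hm
  · have h := coeff_eq_esymm_roots_of_card (hcard.trans (natDegree_cotSqPoly n).symm)
      (k := n - m) (by rw [natDegree_cotSqPoly]; omega)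
    rw [coeff_cotSqPoly (Nat.sub_le n m), leadingCoeff_cotSqPoly, natDegree_cotSqPoly,
      Nat.sub_sub_self hm,
      Nat.choose_symm_of_eq_add (show 2 * n + 1 = 2 * (n - m) + (2 * m + 1) by omega)] at h
    rw [mul_comm (2 * (n : ℝ) + 1), mul_assoc] at h
    rw [mul_left_cancel₀ (pow_ne_zero m (neg_ne_zero.mpr one_ne_zero)) h,
      mul_div_cancel_left₀ _ (by positivity)]
  · rw [Multiset.esymm, Multiset.powersetCard_eq_empty _ (by rw [hcard]; exact hm),
      Nat.choose_eq_zero_of_lt (by omega)]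
    simp

theorem stmt19_general (n : ℕ) :
    ∑ j ∈ Finset.Icc 1 n, 1 / (Real.sin ((j : ℝ) * π / (2 * n + 1))) ^ 4 =
    8 * (n : ℝ) * ((n : ℝ) + 1) * ((n : ℝ) ^ 2 + (n : ℝ) + 3) / 45 := by
  have hcsc : ∀ j ∈ Icc 1 n,
      1 / sin (j * π / (2 * n + 1)) ^ 4 = (1 + cot (j * π / (2 * n + 1)) ^ 2) ^ 2 := by
    intro j hj
    rw [one_add_cot_sq (sin_mul_pi_div_two_mul_add_one_pos hj).ne']
    ring
  have hroots : ∑ j ∈ Icc 1 n, (1 + cot (j * π / (2 * n + 1)) ^ 2) ^ 2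
      = ((cotSqPoly n).roots.map fun x => (1 + x) ^ 2).sum := by
    rw [roots_cotSqPoly, Multiset.map_map, sum_eq_multiset_sum]
    rfl
  rw [sum_congr rfl hcsc, hroots, Multiset.sum_map_one_add_sq, Multiset.sum_map_sq,
    ← Multiset.esymm_one, esymm_roots_cotSqPoly, esymm_roots_cotSqPoly, roots_cotSqPoly]
  simp only [Multiset.card_map, card_val, Nat.card_Icc, Nat.cast_choose_eq_descPochhammer_div,
    descPochhammer_succ_eval, descPochhammer_zero, eval_one, Nat.factorial]
  push_cast
  field_simp
  ring

theorem stmt19 (n : ℕ) (hn : 1 ≤ n) :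
    ∑ j ∈ Finset.Icc 1 n, 1 / (Real.sin ((j : ℝ) * π / (2 * n + 1))) ^ 4 =
    8 * (n : ℝ) * ((n : ℝ) + 1) * ((n : ℝ) ^ 2 + (n : ℝ) + 3) / 45 :=
  stmt19_general n
end
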